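/- arXiv:1802.08151 — 13 statements merged into one kernel-verified Lean document; each statement's English description precedes it below -/
import Mathlib

section
/- Let c > 0 and β ∈ (0,1). Let V : [0,∞) → ℝ be a differentiable function with V(t) ≥ 0 for all t ≥ 0, and suppose V'(t) ≤ -c·V(t)^β for all t ≥ 0 with V(t) > 0. Then V(t) = 0 for all t ≥ V(0)^(1-β)/(c·(1-β)). -/
/-- Finite-time settling lemma: a nonnegative differentiable function satisfying
`V' ≤ -c·V^β` (with `c > 0`, `0 < β < 1`) vanishes for all
`t ≥ V(0)^(1-β)/(c(1-β))`. -/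
theorem stmt_0 (c β : ℝ) (hc : 0 < c) (hβ0 : 0 < β) (hβ1 : β < 1)
    (V : ℝ → ℝ) (hdiff : ∀ t, 0 ≤ t → DifferentiableAt ℝ V t)
    (hnonneg : ∀ t, 0 ≤ t → 0 ≤ V t)
    (hineq : ∀ t, 0 ≤ t → 0 < V t → deriv V t ≤ -c * V t ^ β) :
    ∀ t, V 0 ^ (1 - β) / (c * (1 - β)) ≤ t → V t = 0 := by
  have hβ' : (0:ℝ) < 1 - β := by linarith
  have hC : 0 < c * (1 - β) := mul_pos hc hβ'
  set T : ℝ := V 0 ^ (1 - β) / (c * (1 - β)) with hT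
  have hT0 : 0 ≤ T := div_nonneg (Real.rpow_nonneg (hnonneg 0 le_rfl) _) hC.le
  -- Step 1: there is t₀ ∈ [0,T] with V t₀ = 0
  have key : ∃ t₀ ∈ Set.Icc (0:ℝ) T, V t₀ = 0 := by
    by_contra h
    push_neg at h
    have hpos : ∀ u ∈ Set.Icc (0:ℝ) T, 0 < V u := fun u hu =>
      lt_of_le_of_ne (hnonneg u hu.1) (Ne.symm (h u hu))
    set g : ℝ → ℝ := fun x => V x ^ (1 - β) + c * (1 - β) * x with hg
    have hderiv : ∀ u ∈ Set.Ioo (0:ℝ) T,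
        HasDerivAt g (deriv V u * (1 - β) * V u ^ (1 - β - 1) + c * (1 - β)) u := by
      intro u hu
      have hVu : 0 < V u := hpos u ⟨hu.1.le, hu.2.le⟩
      have h1 : HasDerivAt (fun x => V x ^ (1 - β))
          (deriv V u * (1 - β) * V u ^ (1 - β - 1)) u :=
        (hdiff u hu.1.le).hasDerivAt.rpow_const (Or.inl hVu.ne')
      have h2 : HasDerivAt (fun x => c * (1 - β) * x) (c * (1 - β)) u := by
        simpa using (hasDerivAt_id u).const_mul (c * (1 - β))
      exact h1.add h2
    have hmono : AntitoneOn g (Set.Icc 0 T) := by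
      apply antitoneOn_of_deriv_nonpos (convex_Icc 0 T)
      · intro x hx
        have hVx : 0 < V x := hpos x hx
        exact (((hdiff x hx.1).continuousAt.rpow_const (Or.inr hβ'.le)).add
          ((continuous_const.mul continuous_id).continuousAt)).continuousWithinAt
      · intro x hx
        rw [interior_Icc] at hx
        exact (hderiv x hx).differentiableAt.differentiableWithinAt
      · intro x hx
        rw [interior_Icc] at hx
        rw [(hderiv x hx).deriv]
        have hVx : 0 < V x := hpos x ⟨hx.1.le, hx.2.le⟩
        have hd : deriv V x ≤ -c * V x ^ β := hineq x hx.1.le hVx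
        have hmul : deriv V x * ((1 - β) * V x ^ (1 - β - 1)) ≤
            -c * V x ^ β * ((1 - β) * V x ^ (1 - β - 1)) :=
          mul_le_mul_of_nonneg_right hd
            (mul_nonneg hβ'.le (Real.rpow_nonneg hVx.le _))
        have hexp : (1 : ℝ) - β - 1 = -β := by ring
        have hone : V x ^ (-β) * V x ^ β = 1 := by
          rw [← Real.rpow_add hVx]; simp
        have heq : -c * V x ^ β * ((1 - β) * V x ^ (1 - β - 1)) = -(c * (1 - β)) := by
          rw [hexp]
          calc -c * V x ^ β * ((1 - β) * V x ^ (-β))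
              = -(c * (1 - β)) * (V x ^ (-β) * V x ^ β) := by ring
            _ = -(c * (1 - β)) := by rw [hone, mul_one]
        have hmul' : deriv V x * (1 - β) * V x ^ (1 - β - 1) ≤ -(c * (1 - β)) := by
          calc deriv V x * (1 - β) * V x ^ (1 - β - 1)
              = deriv V x * ((1 - β) * V x ^ (1 - β - 1)) := by ring
            _ ≤ -c * V x ^ β * ((1 - β) * V x ^ (1 - β - 1)) := hmul
            _ = -(c * (1 - β)) := heq
        linarith
    have hTmem : T ∈ Set.Icc (0:ℝ) T := ⟨hT0, le_rfl⟩
    have h0mem : (0:ℝ) ∈ Set.Icc (0:ℝ) T := ⟨le_rfl, hT0⟩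
    have := hmono h0mem hTmem hT0
    have hTC : c * (1 - β) * T = V 0 ^ (1 - β) := by
      rw [hT]; field_simp
    have hVT : 0 < V T := hpos T hTmem
    have hVTp : 0 < V T ^ (1 - β) := Real.rpow_pos_of_pos hVT _
    simp only [hg] at this
    nlinarith
  -- Step 2: V stays zero
  obtain ⟨t₀, ht₀, hVt₀⟩ := key
  intro t ht
  have ht₀t : t₀ ≤ t := ht₀.2.trans ht
  have ht0 : 0 ≤ t := ht₀.1.trans ht₀t
  set S : Set ℝ := {u | u ∈ Set.Icc t₀ t ∧ V u = 0} with hS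
  have hSne : S.Nonempty := ⟨t₀, ⟨le_rfl, ht₀t⟩, hVt₀⟩
  have hSbdd : BddAbove S := ⟨t, fun u hu => hu.1.2⟩
  have hScl : IsClosed S := by
    have : S = Set.Icc t₀ t ∩ V ⁻¹' {0} := by
      ext u; simp [hS]
    rw [this]
    apply ContinuousOn.preimage_isClosed_of_isClosed _ isClosed_Icc isClosed_singleton
    intro x hx
    exact (hdiff x (ht₀.1.trans hx.1)).continuousAt.continuousWithinAt
  set s := sSup S with hs
  have hsS : s ∈ S := hScl.csSup_mem hSne hSbdd
  have hst : s ≤ t := csSup_le hSne fun u hu => hu.1.2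
  have hs0 : 0 ≤ s := ht₀.1.trans hsS.1.1
  have hVs : V s = 0 := hsS.2
  -- V > 0 on (s, t]
  have hpos : ∀ u, s < u → u ≤ t → 0 < V u := by
    intro u hsu hut
    rcases (hnonneg u (hs0.trans hsu.le)).lt_or_eq with h | h
    · exact h
    · exfalso
      have : u ∈ S := ⟨⟨hsS.1.1.trans hsu.le, hut⟩, h.symm⟩
      exact absurd (le_csSup hSbdd this) (not_le.mpr hsu)
  have hanti : AntitoneOn V (Set.Icc s t) := by
    apply antitoneOn_of_deriv_nonpos (convex_Icc s t)
    · intro x hx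
      exact (hdiff x (hs0.trans hx.1)).continuousAt.continuousWithinAt
    · intro x hx
      rw [interior_Icc] at hx
      exact ((hdiff x (hs0.trans hx.1.le)).differentiableWithinAt)
    · intro x hx
      rw [interior_Icc] at hx
      have hVx : 0 < V x := hpos x hx.1 hx.2.le
      have := hineq x (hs0.trans hx.1.le) hVx
      have : deriv V x ≤ -c * V x ^ β := this
      nlinarith [Real.rpow_pos_of_pos hVx β]
  have : V t ≤ V s := hanti ⟨le_rfl, hst⟩ ⟨hst, le_rfl⟩ hst
  exact le_antisymm (hVs ▸ this) (hnonneg t ht0)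
end

section
/- Let c > 0 and β ∈ (0,1). Let V : [0,∞) → ℝ be a differentiable function with V(t) ≥ 0 for all t ≥ 0, satisfying V'(t) ≤ V(t) - c·V(t)^β for all t ≥ 0 with V(t) > 0. If V(0)^(1-β) < c, then there exists a finite T ≥ 0 such that V(t) = 0 for all t ≥ T. -/
/-!
The substitution `W = V ^ (1 - β)` turns `V' ≤ V - c V ^ β` into the linear inequality
`W' ≤ (1 - β) (W - c)` wherever `V > 0`. Since `V' < 0` whenever `0 < V` and `V ^ (1 - β) < c`,
the sublevel sets `{V ≤ K}` with `K ^ (1 - β) < c` are forward invariant; hence `W ≤ W 0 < c`,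
so `W` decreases at rate at least `(1 - β) (c - W 0)` as long as `V > 0` and must hit zero
by time `W 0 / ((1 - β) (c - W 0))`. Invariance of `{V ≤ K}` for all small `K > 0` keeps `V`
at zero afterwards.
-/

open Set Filter Topology

lemma sub_mul_rpow_eq_rpow_mul {v : ℝ} (hv : 0 < v) (c β : ℝ) :
    v - c * v ^ β = v ^ β * (v ^ (1 - β) - c) := by
  rw [mul_sub, ← Real.rpow_add hv, add_sub_cancel, Real.rpow_one, mul_comm]

lemma deriv_rpow_one_sub_le {c β : ℝ} (hβ1 : β < 1) {V : ℝ → ℝ} {u : ℝ}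
    (hd : DifferentiableAt ℝ V u) (hVu : 0 < V u) (h : deriv V u ≤ V u - c * V u ^ β) :
    deriv (fun x => V x ^ (1 - β)) u ≤ (1 - β) * (V u ^ (1 - β) - c) := by
  rw [(hd.hasDerivAt.rpow_const (Or.inl hVu.ne')).deriv, sub_sub_cancel_left]
  have hβ : V u ^ β * V u ^ (-β) = 1 := by
    rw [← Real.rpow_add hVu, add_neg_cancel, Real.rpow_zero]
  calc deriv V u * (1 - β) * V u ^ (-β)
      ≤ (V u - c * V u ^ β) * (1 - β) * V u ^ (-β) := by
        gcongr
    _ = (1 - β) * (V u ^ (1 - β) - c) := by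
        rw [sub_mul_rpow_eq_rpow_mul hVu]
        linear_combination (1 - β) * (V u ^ (1 - β) - c) * hβ

lemma le_of_le_of_rpow_lt {c β : ℝ} {V : ℝ → ℝ}
    (hdiff : ∀ t, 0 ≤ t → DifferentiableAt ℝ V t)
    (hineq : ∀ t, 0 ≤ t → 0 < V t → deriv V t ≤ V t - c * V t ^ β)
    {a K : ℝ} (ha : 0 ≤ a) (hK : 0 < K) (hKc : K ^ (1 - β) < c) (hVa : V a ≤ K)
    {t : ℝ} (ht : a ≤ t) : V t ≤ K := by
  have hderiv_neg : ∀ x, a ≤ x → V x = K → deriv V x < 0 := by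
    intro x hx hVx
    calc deriv V x ≤ V x - c * V x ^ β := hineq x (ha.trans hx) (hVx ▸ hK)
      _ = K ^ β * (K ^ (1 - β) - c) := by rw [hVx, sub_mul_rpow_eq_rpow_mul hK]
      _ < 0 := mul_neg_of_pos_of_neg (by positivity) (by linarith)
  refine image_le_of_deriv_right_lt_deriv_boundary' (f := V) (B := fun _ => K) (b := t)
    (fun x hx => (hdiff x (ha.trans hx.1)).continuousAt.continuousWithinAt)
    (fun x hx => (hdiff x (ha.trans hx.1)).hasDerivAt.hasDerivWithinAt) hVa
    continuousOn_const (fun _ _ => hasDerivWithinAt_const _ _ _)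
    (fun x hx => hderiv_neg x hx.1) ⟨ht, le_rfl⟩

lemma eq_zero_of_eq_zero_of_le {c β : ℝ} (hc : 0 < c) (hβ1 : β < 1) {V : ℝ → ℝ}
    (hdiff : ∀ t, 0 ≤ t → DifferentiableAt ℝ V t)
    (hnonneg : ∀ t, 0 ≤ t → 0 ≤ V t)
    (hineq : ∀ t, 0 ≤ t → 0 < V t → deriv V t ≤ V t - c * V t ^ β)
    {a : ℝ} (ha : 0 ≤ a) (hVa : V a = 0) {t : ℝ} (ht : a ≤ t) : V t = 0 := by
  have hsmall : ∀ᶠ K in 𝓝[>] 0, K ^ (1 - β) < c := by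
    have h := Real.continuousAt_rpow_const 0 (1 - β) (Or.inr (by linarith))
    rw [ContinuousAt, Real.zero_rpow (by linarith)] at h
    exact nhdsWithin_le_nhds (h.eventually_lt_const hc)
  have hle : ∀ᶠ K in 𝓝[>] 0, V t ≤ K := by
    filter_upwards [hsmall, self_mem_nhdsWithin] with K hKc hK
    exact le_of_le_of_rpow_lt hdiff hineq ha hK hKc (hVa ▸ hK.le) ht
  exact le_antisymm (ge_of_tendsto (tendsto_id.mono_left nhdsWithin_le_nhds) hle) (hnonneg t (ha.trans ht))

lemma exists_mem_Icc_eq_zero {c β : ℝ} (hβ1 : β < 1) {V : ℝ → ℝ}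
    (hdiff : ∀ t, 0 ≤ t → DifferentiableAt ℝ V t)
    (hnonneg : ∀ t, 0 ≤ t → 0 ≤ V t)
    (hineq : ∀ t, 0 ≤ t → 0 < V t → deriv V t ≤ V t - c * V t ^ β)
    (hinit : V 0 ^ (1 - β) < c) :
    ∃ t ∈ Icc 0 (V 0 ^ (1 - β) / ((1 - β) * (c - V 0 ^ (1 - β)))), V t = 0 := by
  set W : ℝ → ℝ := fun x => V x ^ (1 - β)
  set m := (1 - β) * (c - W 0)
  have hm : 0 < m := mul_pos (by linarith) (by linarith)
  set T := W 0 / m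
  have hT : 0 ≤ T := div_nonneg (Real.rpow_nonneg (hnonneg 0 le_rfl) _) hm.le
  by_contra! hne
  have hpos : ∀ x ∈ Icc 0 T, 0 < V x := fun x hx =>
    (hnonneg x hx.1).lt_of_ne' (hne x hx)
  have hWle : ∀ x ∈ Icc 0 T, W x ≤ W 0 := fun x hx =>
    Real.rpow_le_rpow (hpos x hx).le
      (le_of_le_of_rpow_lt hdiff hineq le_rfl (hpos 0 ⟨le_rfl, hT⟩) hinit le_rfl hx.1)
      (by linarith)
  have hWdiff : ∀ x ∈ Icc 0 T, DifferentiableAt ℝ W x := fun x hx =>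
    (hdiff x hx.1).rpow_const (Or.inl (hpos x hx).ne')
  have hslope : ∀ x ∈ interior (Icc 0 T), deriv W x ≤ -m := by
    rw [interior_Icc]
    intro x hx
    have hx' : x ∈ Icc 0 T := Ioo_subset_Icc_self hx
    calc deriv W x ≤ (1 - β) * (W x - c) :=
          deriv_rpow_one_sub_le hβ1 (hdiff x hx'.1) (hpos x hx') (hineq x hx'.1 (hpos x hx'))
      _ ≤ -m := by nlinarith [hWle x hx']
  have hdecay := (convex_Icc 0 T).image_sub_le_mul_sub_of_deriv_le
    (fun x hx => (hWdiff x hx).continuousAt.continuousWithinAt)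
    (fun x hx => (hWdiff x (interior_subset hx)).differentiableWithinAt) hslope
    0 ⟨le_rfl, hT⟩ T ⟨hT, le_rfl⟩ hT
  have hWT : 0 < W T := Real.rpow_pos_of_pos (hpos T ⟨hT, le_rfl⟩) _
  have hmT : m * T = W 0 := mul_div_cancel₀ _ hm.ne'
  linarith

theorem stmt_1_general (c β : ℝ) (hc : 0 < c) (hβ1 : β < 1)
    (V : ℝ → ℝ) (hdiff : ∀ t, 0 ≤ t → DifferentiableAt ℝ V t)
    (hnonneg : ∀ t, 0 ≤ t → 0 ≤ V t)
    (hineq : ∀ t, 0 ≤ t → 0 < V t → deriv V t ≤ V t - c * V t ^ β)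
    (hinit : V 0 ^ (1 - β) < c) :
    ∃ T : ℝ, 0 ≤ T ∧ ∀ t, T ≤ t → V t = 0 := by
  obtain ⟨t₀, ht₀, hVt₀⟩ := exists_mem_Icc_eq_zero hβ1 hdiff hnonneg hineq hinit
  exact ⟨t₀, ht₀.1, fun t ht => eq_zero_of_eq_zero_of_le hc hβ1 hdiff hnonneg hineq ht₀.1 hVt₀ ht⟩

/-- Local finite-time comparison lemma: if `V' ≤ V - c·V^β` (with `c > 0`,
`0 < β < 1`) and `V(0)^(1-β) < c`, then `V` vanishes after some finite time. -/
theorem stmt_1 (c β : ℝ) (hc : 0 < c) (hβ0 : 0 < β) (hβ1 : β < 1)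
    (V : ℝ → ℝ) (hdiff : ∀ t, 0 ≤ t → DifferentiableAt ℝ V t)
    (hnonneg : ∀ t, 0 ≤ t → 0 ≤ V t)
    (hineq : ∀ t, 0 ≤ t → 0 < V t → deriv V t ≤ V t - c * V t ^ β)
    (hinit : V 0 ^ (1 - β) < c) :
    ∃ T : ℝ, 0 ≤ T ∧ ∀ t, T ≤ t → V t = 0 :=
  stmt_1_general c β hc hβ1 V hdiff hnonneg hineq hinit
end

section
/- Let h : ℝ → ℝ be continuous with h(0) = 0, let D ⊆ ℝ be an open set containing 0, and suppose there exist k > 0 and α ∈ (0,1) such that sign(x)·h(x) ≤ -k·|x|^α for all x ∈ D. Let x : [0,∞) → ℝ be differentiable with x'(t) = h(x(t)) and x(t) ∈ D for all t ≥ 0. Then x(t) = 0 for all t ≥ |x(0)|^(1-α)/(k·(1-α)). -/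
/-!
Along a solution, `u = |x|` satisfies `u' ≤ -k u^α` wherever `u > 0`, so on every interval where
the solution does not vanish, `u^(1-α) + k(1-α) t` is nonincreasing. Applied from the last zero
`s ≤ t` of `u`, or from `0`, this forces `u t ^ (1-α) ≤ 0` as soon as `k(1-α) t ≥ u 0 ^ (1-α)`.
-/

open Set

lemma HasDerivAt.abs_of_ne_zero {f : ℝ → ℝ} {f' t : ℝ} (hf : HasDerivAt f f' t) (ht : f t ≠ 0) :
    HasDerivAt (fun s => |f s|) (Real.sign (f t) * f') t := by
  rcases ht.lt_or_gt with hneg | hpos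
  · rw [Real.sign_of_neg hneg]
    exact (hasDerivAt_abs_neg hneg).comp t hf
  · rw [Real.sign_of_pos hpos]
    exact (hasDerivAt_abs_pos hpos).comp t hf

lemma rpow_one_sub_add_le_of_hasDerivAt_le {u u' : ℝ → ℝ} {k α s t : ℝ} (hα : α < 1)
    (hst : s ≤ t) (hu : ContinuousOn u (Icc s t)) (hpos : ∀ r ∈ Ioo s t, 0 < u r)
    (hu' : ∀ r ∈ Ioo s t, HasDerivAt u (u' r) r) (hdecay : ∀ r ∈ Ioo s t, u' r ≤ -k * u r ^ α) :
    u t ^ (1 - α) + k * (1 - α) * t ≤ u s ^ (1 - α) + k * (1 - α) * s := by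
  have h1α : 0 < 1 - α := by linarith
  have hcont : ContinuousOn (fun r => u r ^ (1 - α) + k * (1 - α) * r) (Icc s t) :=
    (hu.rpow_const fun _ _ => Or.inr h1α.le).add (continuousOn_const.mul continuousOn_id)
  have hderiv : ∀ r ∈ interior (Icc s t), HasDerivWithinAt
      (fun r => u r ^ (1 - α) + k * (1 - α) * r)
      (u' r * (1 - α) * u r ^ (1 - α - 1) + k * (1 - α)) (interior (Icc s t)) r := by
    intro r hr
    rw [interior_Icc] at hr
    have hlin : HasDerivAt (fun r => k * (1 - α) * r) (k * (1 - α)) r := by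
      simpa using (hasDerivAt_id r).const_mul (k * (1 - α))
    exact (((hu' r hr).rpow_const (Or.inl (hpos r hr).ne')).add hlin).hasDerivWithinAt
  have hnonpos : ∀ r ∈ interior (Icc s t), u' r * (1 - α) * u r ^ (1 - α - 1) + k * (1 - α) ≤ 0 := by
    intro r hr
    rw [interior_Icc] at hr
    have hur := hpos r hr
    have hcancel : u r ^ α * u r ^ (-α) = 1 := by
      rw [← Real.rpow_add hur, add_neg_cancel, Real.rpow_zero]
    have hscaled : u' r * u r ^ (-α) ≤ -k := by
      calc u' r * u r ^ (-α) ≤ -k * u r ^ α * u r ^ (-α) :=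
            mul_le_mul_of_nonneg_right (hdecay r hr) (Real.rpow_nonneg hur.le _)
        _ = -k := by rw [mul_assoc, hcancel, mul_one]
    have hexp : 1 - α - 1 = -α := by ring
    rw [hexp]
    linarith [mul_le_mul_of_nonneg_left hscaled h1α.le]
  exact antitoneOn_of_hasDerivWithinAt_nonpos (convex_Icc s t) hcont hderiv hnonpos
    (left_mem_Icc.2 hst) (right_mem_Icc.2 hst) hst

lemma eq_zero_of_hasDerivAt_le_neg_rpow {u u' : ℝ → ℝ} {k α : ℝ} (hk : 0 < k) (hα : α < 1)
    (hu_nonneg : ∀ t, 0 ≤ u t) (hu : ContinuousOn u (Ici 0))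
    (hu' : ∀ t, 0 ≤ t → 0 < u t → HasDerivAt u (u' t) t)
    (hdecay : ∀ t, 0 ≤ t → 0 < u t → u' t ≤ -k * u t ^ α)
    {t : ℝ} (ht : u 0 ^ (1 - α) / (k * (1 - α)) ≤ t) : u t = 0 := by
  have h1α : 0 < 1 - α := by linarith
  have hkα : 0 < k * (1 - α) := mul_pos hk h1α
  have ht0 : 0 ≤ t := (div_nonneg (Real.rpow_nonneg (hu_nonneg 0) _) hkα.le).trans ht
  have hreach : u 0 ^ (1 - α) ≤ k * (1 - α) * t := by
    rwa [div_le_iff₀ hkα, mul_comm] at ht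
  by_contra hut
  have hut_pos : 0 < u t ^ (1 - α) :=
    Real.rpow_pos_of_pos ((hu_nonneg t).lt_of_ne' hut) _
  have huIcc : ContinuousOn u (Icc 0 t) := hu.mono Icc_subset_Ici_self
  -- `s` is the last zero of `u` on `[0, t]`, or `0` if there is none.
  set S : Set ℝ := insert 0 (Icc 0 t ∩ u ⁻¹' {0}) with hS
  have hS_closed : IsClosed S := by
    rw [hS, insert_eq]
    exact isClosed_singleton.union
      (huIcc.preimage_isClosed_of_isClosed isClosed_Icc isClosed_singleton)
  have hS_le : ∀ r ∈ S, r ≤ t := by rintro r (rfl | ⟨hr, -⟩); exacts [ht0, hr.2]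
  have hS_bdd : BddAbove S := ⟨t, hS_le⟩
  have hs_mem : sSup S ∈ S := hS_closed.csSup_mem (insert_nonempty _ _) hS_bdd
  set s := sSup S
  have hs0 : 0 ≤ s := le_csSup hS_bdd (mem_insert 0 _)
  have hst : s ≤ t := csSup_le (insert_nonempty _ _) hS_le
  have hpos : ∀ r ∈ Ioo s t, 0 < u r := fun r hr =>
    (hu_nonneg r).lt_of_ne' fun hur => hr.1.not_ge <|
      le_csSup hS_bdd (mem_insert_of_mem _ ⟨⟨hs0.trans hr.1.le, hr.2.le⟩, hur⟩)
  have hmono := rpow_one_sub_add_le_of_hasDerivAt_le hα hst (hu.mono fun r hr => hs0.trans hr.1)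
    hpos (fun r hr => hu' r (hs0.trans hr.1.le) (hpos r hr))
    (fun r hr => hdecay r (hs0.trans hr.1.le) (hpos r hr))
  rcases hs_mem with hs | ⟨-, hus⟩
  · rw [hs] at hmono
    linarith
  · rw [mem_preimage, mem_singleton_iff] at hus
    rw [hus, Real.zero_rpow h1α.ne'] at hmono
    linarith [mul_le_mul_of_nonneg_left hst hkα.le]

theorem stmt_2_general (h : ℝ → ℝ) (D : Set ℝ) (k α : ℝ) (hk : 0 < k) (hα1 : α < 1)
    (hcond : ∀ y ∈ D, Real.sign y * h y ≤ -k * |y| ^ α)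
    (x : ℝ → ℝ) (hx : ∀ t, 0 ≤ t → HasDerivAt x (h (x t)) t)
    (hxD : ∀ t, 0 ≤ t → x t ∈ D) :
    ∀ t, |x 0| ^ (1 - α) / (k * (1 - α)) ≤ t → x t = 0 := by
  intro t ht
  have hcont : ContinuousOn (fun s => |x s|) (Ici 0) := fun s hs =>
    (hx s hs).continuousAt.abs.continuousWithinAt
  have habs := eq_zero_of_hasDerivAt_le_neg_rpow (u' := fun s => Real.sign (x s) * h (x s))
    hk hα1 (fun s => abs_nonneg (x s)) hcont
    (fun s hs hxs => (hx s hs).abs_of_ne_zero (abs_pos.1 hxs))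
    (fun s hs _ => hcond (x s) (hxD s hs)) ht
  exact abs_eq_zero.1 habs

/-- Sufficient geometric condition for finite-time stability of a scalar system:
if `sign(x)·h(x) ≤ -k·|x|^α` on an open neighborhood `D` of the origin, then any
solution of `ẋ = h(x)` remaining in `D` reaches the origin by time
`|x(0)|^(1-α)/(k(1-α))`. -/
theorem stmt_2 (h : ℝ → ℝ) (hcont : Continuous h) (h0 : h 0 = 0)
    (D : Set ℝ) (hDopen : IsOpen D) (h0D : (0 : ℝ) ∈ D)
    (k α : ℝ) (hk : 0 < k) (hα0 : 0 < α) (hα1 : α < 1)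
    (hcond : ∀ y ∈ D, Real.sign y * h y ≤ -k * |y| ^ α)
    (x : ℝ → ℝ) (hx : ∀ t, 0 ≤ t → HasDerivAt x (h (x t)) t)
    (hxD : ∀ t, 0 ≤ t → x t ∈ D) :
    ∀ t, |x 0| ^ (1 - α) / (k * (1 - α)) ≤ t → x t = 0 :=
  stmt_2_general h D k α hk hα1 hcond x hx hxD
end

section
/- Let h : ℝ → ℝ with h(0) = 0, and suppose h is Lipschitz at the origin, i.e., there exist L > 0 and δ > 0 such that |h(y)| ≤ L·|y| for all y with |y| < δ. Let x : [0,∞) → ℝ be differentiable with x'(t) = h(x(t)) for all t ≥ 0 and x(0) ≠ 0. Then x(t) ≠ 0 for all t ≥ 0. -/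
open Set Real

/-- Necessary condition: if the scalar vector field `h` (with `h(0) = 0`) is
Lipschitz at the origin, then no solution of `ẋ = h(x)` starting away from the
origin ever reaches the origin. -/
theorem stmt_3 (h : ℝ → ℝ) (h0 : h 0 = 0)
    (L δ : ℝ) (hL : 0 < L) (hδ : 0 < δ)
    (hlip : ∀ y : ℝ, |y| < δ → |h y| ≤ L * |y|)
    (x : ℝ → ℝ) (hx : ∀ t, 0 ≤ t → HasDerivAt x (h (x t)) t)
    (hx0 : x 0 ≠ 0) :
    ∀ t, 0 ≤ t → x t ≠ 0 := by
  intro t ht hxt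
  have hcont : ∀ s, 0 ≤ s → ContinuousAt x s := fun s hs => (hx s hs).continuousAt
  set S : Set ℝ := Icc 0 t ∩ x ⁻¹' {0} with hS
  have hSne : S.Nonempty := ⟨t, ⟨ht, le_refl t⟩, hxt⟩
  have hSbdd : BddBelow S := ⟨0, fun s hs => hs.1.1⟩
  have hSclosed : IsClosed S :=
    ContinuousOn.preimage_isClosed_of_isClosed
      (fun s hs => (hcont s hs.1).continuousWithinAt) isClosed_Icc isClosed_singleton
  set T := sInf S with hT
  have hTS : T ∈ S := hSclosed.csInf_mem hSne hSbdd
  have hT0 : 0 ≤ T := hTS.1.1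
  have hxT : x T = 0 := hTS.2
  have hTpos : 0 < T := by
    rcases hT0.lt_or_eq with h' | h'
    · exact h'
    · exact absurd hxT (by rw [← h']; exact hx0)
  -- find ε > 0 with ε ≤ T and |x s| < δ for s ∈ [T - ε, T]
  obtain ⟨ε', hε', hball⟩ : ∃ ε' > 0, ∀ s, |s - T| < ε' → |x s| < δ := by
    have hten := (hcont T hT0).tendsto
    rw [Metric.tendsto_nhds_nhds] at hten
    obtain ⟨ε', hε', H⟩ := hten δ hδ
    refine ⟨ε', hε', fun s hs => ?_⟩
    have := H (by simpa [Real.dist_eq] using hs)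
    simpa [Real.dist_eq, hxT] using this
  set ε := min (ε' / 2) T with hε
  have hεpos : 0 < ε := lt_min (by linarith) hTpos
  have hεT : ε ≤ T := min_le_right _ _
  -- time-reversed solution
  set g : ℝ → ℝ := fun s => x (T - s) with hg
  have hg' : ∀ s ∈ Icc (0:ℝ) ε, HasDerivAt g (h (g s) * (-1)) s := by
    intro s hs
    have h1 : (0:ℝ) ≤ T - s := by
      have := hs.2.trans hεT
      linarith
    exact (hx (T - s) h1).comp s ((hasDerivAt_id s).const_sub T)
  have hgsmall : ∀ s ∈ Ico (0:ℝ) ε, |g s| < δ := by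
    intro s hs
    apply hball
    have : |T - s - T| = s := by rw [abs_of_nonpos (by linarith [hs.1]) ]; ring
    rw [this]
    exact hs.2.trans_le ((min_le_left _ _).trans (by linarith))
  have key := norm_le_gronwallBound_of_norm_deriv_right_le
    (f := g) (f' := fun s => h (g s) * (-1)) (δ := 0) (K := L) (ε := 0) (a := 0) (b := ε)
    (fun s hs => ((hg' s hs).continuousAt).continuousWithinAt)
    (fun s hs => (hg' s (Ico_subset_Icc_self hs)).hasDerivWithinAt)
    (by simp [hg, hxT])
    (by
      intro s hs
      have := hlip (g s) (hgsmall s hs)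
      simpa [abs_mul, Real.norm_eq_abs] using this)
  have hgε : ‖g ε‖ ≤ 0 := by
    have := key ε ⟨hεpos.le, le_refl ε⟩
    simpa [gronwallBound_ε0_δ0] using this
  have hgε0 : x (T - ε) = 0 := by
    have := norm_le_zero_iff.mp hgε
    simpa [hg] using this
  -- contradiction with minimality of T
  have hmem : T - ε ∈ S := ⟨⟨by linarith, by linarith [hTS.1.2]⟩, hgε0⟩
  have := csInf_le hSbdd hmem
  linarith
end

section
/- Let n ≥ 1, k > 0, α ∈ (0,1), and let x : [0,∞) → ℝⁿ be differentiable with x'(t) = -k·x(t)·‖x(t)‖^(α-1) whenever x(t) ≠ 0 and x'(t) = 0 whenever x(t) = 0. Then x(t) = 0 for all t ≥ ‖x(0)‖^(1-α)/(k·(1-α)). -/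
/-!
Along a solution, `‖x‖²` has derivative `-2k‖x‖^(1+α) ≤ 0`, so `‖x‖` never increases and once
`x` vanishes it stays at the origin. While `x ≠ 0`, the function `‖x‖^(1-α)` decreases at the
constant rate `k(1-α)`; being nonnegative, it must reach `0` by time `‖x(0)‖^(1-α)/(k(1-α))`.
-/

open Set
open scoped RealInnerProductSpace

variable {E : Type*} [NormedAddCommGroup E] [InnerProductSpace ℝ E]

theorem antitoneOn_norm_sq_of_hasDerivAt_smul_self {x : ℝ → E} {c : ℝ → ℝ} {D : Set ℝ}
    (hD : Convex ℝ D) (hx : ∀ t ∈ D, HasDerivAt x (c t • x t) t) (hc : ∀ t ∈ D, c t ≤ 0) :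
    AntitoneOn (fun t => ‖x t‖ ^ 2) D := by
  refine antitoneOn_of_hasDerivWithinAt_nonpos hD
    (fun t ht => (hx t ht).norm_sq.continuousAt.continuousWithinAt)
    (fun t ht => (hx t (interior_subset ht)).norm_sq.hasDerivWithinAt) fun t ht => ?_
  rw [real_inner_smul_right, real_inner_self_eq_norm_sq]
  nlinarith [hc t (interior_subset ht), sq_nonneg ‖x t‖]

theorem HasDerivAt.norm_rpow_of_smul_self {x : ℝ → E} {c p t : ℝ}
    (hx : HasDerivAt x (c • x t) t) (hxt : x t ≠ 0) :
    HasDerivAt (fun s => ‖x s‖ ^ p) (p * c * ‖x t‖ ^ p) t := by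
  have hpos : 0 < ‖x t‖ := norm_pos_iff.mpr hxt
  have hsq : ∀ (y : E) (q : ℝ), (‖y‖ ^ 2) ^ q = ‖y‖ ^ (2 * q) := fun y q => by
    rw [← Real.rpow_natCast, ← Real.rpow_mul (norm_nonneg _), Nat.cast_ofNat]
  convert hx.norm_sq.rpow_const (p := p / 2) (Or.inl (by positivity)) using 1
  · simp only [hsq, mul_div_cancel₀ p two_ne_zero]
  · rw [real_inner_smul_right, real_inner_self_eq_norm_sq, hsq,
      show 2 * (p / 2 - 1) = p - 2 by ring, Real.rpow_sub hpos, Real.rpow_two]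
    field_simp

theorem norm_rpow_eq_sub_of_hasDerivAt {x : ℝ → E} {k α a b : ℝ} (hab : a ≤ b)
    (hx : ∀ s ∈ Icc a b, HasDerivAt x ((-k * ‖x s‖ ^ (α - 1)) • x s) s)
    (hne : ∀ s ∈ Icc a b, x s ≠ 0) :
    ‖x b‖ ^ (1 - α) = ‖x a‖ ^ (1 - α) - k * (1 - α) * (b - a) := by
  have hderiv : ∀ s ∈ Icc a b, HasDerivAt (fun s => ‖x s‖ ^ (1 - α) + k * (1 - α) * s) 0 s := by
    intro s hs
    have hrate : (1 - α) * (-k * ‖x s‖ ^ (α - 1)) * ‖x s‖ ^ (1 - α) = -(k * (1 - α)) := by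
      have hpos : 0 < ‖x s‖ := norm_pos_iff.mpr (hne s hs)
      rw [mul_assoc, mul_assoc, ← Real.rpow_add hpos, show α - 1 + (1 - α) = 0 by ring,
        Real.rpow_zero]
      ring
    refine (((hx s hs).norm_rpow_of_smul_self (hne s hs)).add
      ((hasDerivAt_id' s).const_mul (k * (1 - α)))).congr_deriv ?_
    rw [hrate]
    ring
  have hconst := constant_of_has_deriv_right_zero
    (fun s hs => (hderiv s hs).continuousAt.continuousWithinAt)
    (fun s hs => (hderiv s (Ico_subset_Icc_self hs)).hasDerivWithinAt) b ⟨hab, le_rfl⟩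
  linarith

theorem stmt_4_general (n : ℕ) (k α : ℝ) (hk : 0 < k) (hα1 : α < 1)
    (x : ℝ → EuclideanSpace ℝ (Fin n))
    (hx : ∀ t, 0 ≤ t → x t ≠ 0 →
      HasDerivAt x ((-k * ‖x t‖ ^ (α - 1)) • x t) t)
    (hx0 : ∀ t, 0 ≤ t → x t = 0 → HasDerivAt x 0 t) :
    ∀ t, ‖x 0‖ ^ (1 - α) / (k * (1 - α)) ≤ t → x t = 0 := by
  have hflow : ∀ t ∈ Ici (0 : ℝ), HasDerivAt x ((-k * ‖x t‖ ^ (α - 1)) • x t) t := by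
    intro t ht
    by_cases h : x t = 0
    · simpa [h] using hx0 t ht h
    · exact hx t ht h
  have hanti := antitoneOn_norm_sq_of_hasDerivAt_smul_self (convex_Ici 0) hflow fun t _ => by
    nlinarith [Real.rpow_nonneg (norm_nonneg (x t)) (α - 1)]
  have hrate : 0 < k * (1 - α) := mul_pos hk (by linarith)
  intro t ht
  have ht0 : 0 ≤ t := (div_nonneg (by positivity) hrate.le).trans ht
  by_contra hxt
  have hne : ∀ s ∈ Icc 0 t, x s ≠ 0 := fun s hs hxs => hxt <| by
    simpa [hxs] using hanti hs.1 ht0 hs.2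
  have hdecay := norm_rpow_eq_sub_of_hasDerivAt ht0 (fun s hs => hflow s hs.1) hne
  have hpos : 0 < ‖x t‖ ^ (1 - α) := Real.rpow_pos_of_pos (norm_pos_iff.mpr hxt) _
  rw [div_le_iff₀ hrate] at ht
  linarith

/-- Finite-time stability of `ẋ = -k·x·‖x‖^(α-1)` on ℝⁿ (with `ẋ = 0` at the
origin): every solution vanishes for `t ≥ ‖x(0)‖^(1-α)/(k(1-α))`. -/
theorem stmt_4 (n : ℕ) (hn : 1 ≤ n) (k α : ℝ) (hk : 0 < k) (hα0 : 0 < α) (hα1 : α < 1)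
    (x : ℝ → EuclideanSpace ℝ (Fin n))
    (hx : ∀ t, 0 ≤ t → x t ≠ 0 →
      HasDerivAt x ((-k * ‖x t‖ ^ (α - 1)) • x t) t)
    (hx0 : ∀ t, 0 ≤ t → x t = 0 → HasDerivAt x 0 t) :
    ∀ t, ‖x 0‖ ^ (1 - α) / (k * (1 - α)) ≤ t → x t = 0 :=
  stmt_4_general n k α hk hα1 x hx hx0
end

section
/- Let k > 0, α ∈ (0,1), let φ : [0,∞) → ℝ be differentiable, and let θ : [0,∞) → ℝ be differentiable with θ'(t) = -k·sign(θ(t) - φ(t))·|θ(t) - φ(t)|^α + φ'(t) for all t ≥ 0. Then θ(t) = φ(t) for all t ≥ |θ(0) - φ(0)|^(1-α)/(k·(1-α)). -/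
/-!
The error `e = θ - φ` satisfies `e' = -k·sign(e)·|e|^α`, so `u = |e|` satisfies `u' = -k·u^α`,
also where `e` vanishes, because there `e' = 0` and `|e|` is differentiable with derivative `0`.
Hence `u` is nonincreasing, and while `u > 0` the quantity `u^(1-α)` decreases at the constant
rate `k(1-α)`; as it cannot become negative, `u` reaches `0` by time `u(0)^(1-α)/(k(1-α))`
and stays there.
-/

open Real Set

theorem HasDerivAt.abs_of_eq_zero {f : ℝ → ℝ} {t : ℝ} (hf : HasDerivAt f 0 t) (h0 : f t = 0) :
    HasDerivAt (fun s => |f s|) 0 t := by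
  rw [hasDerivAt_iff_isLittleO] at hf ⊢
  simp only [h0, abs_zero, smul_zero, sub_zero] at hf ⊢
  exact hf.abs_left

theorem HasDerivAt.abs_of_neg_mul_sign_mul_rpow {e : ℝ → ℝ} {k α t : ℝ} (hα : 0 < α)
    (he : HasDerivAt e (-k * Real.sign (e t) * |e t| ^ α) t) :
    HasDerivAt (fun s => |e s|) (-k * |e t| ^ α) t := by
  rcases lt_trichotomy (e t) 0 with hneg | hzero | hpos
  · refine ((hasDerivAt_abs_neg hneg).comp t he).congr_deriv ?_
    rw [sign_of_neg hneg]
    ring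
  · rw [hzero, sign_zero, mul_zero, zero_mul] at he
    rw [hzero, abs_zero, zero_rpow hα.ne', mul_zero]
    exact he.abs_of_eq_zero hzero
  · refine ((hasDerivAt_abs_pos hpos).comp t he).congr_deriv ?_
    rw [sign_of_pos hpos]
    ring

section NegMulRpow

variable {u : ℝ → ℝ} {k α : ℝ}

theorem HasDerivAt.rpow_one_sub_of_neg_mul_rpow {t : ℝ} (hu : HasDerivAt u (-k * u t ^ α) t)
    (hpos : 0 < u t) : HasDerivAt (fun s => u s ^ (1 - α)) (-(k * (1 - α))) t := by
  refine (hu.rpow_const (p := 1 - α) (Or.inl hpos.ne')).congr_deriv ?_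
  have : u t ^ α * u t ^ (1 - α - 1) = 1 := by
    rw [← rpow_add hpos]
    norm_num
  linear_combination (-(k * (1 - α))) * this

theorem antitoneOn_of_hasDerivAt_neg_mul_rpow (hk : 0 ≤ k) (hu0 : ∀ t, 0 ≤ u t)
    (hu : ∀ t, 0 ≤ t → HasDerivAt u (-k * u t ^ α) t) : AntitoneOn u (Ici 0) := by
  refine antitoneOn_of_deriv_nonpos (convex_Ici 0)
    (fun s hs => (hu s hs).continuousAt.continuousWithinAt) (fun s hs => ?_) (fun s hs => ?_)
    <;> rw [interior_Ici] at hs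
  · exact (hu s hs.le).differentiableAt.differentiableWithinAt
  · rw [(hu s hs.le).deriv, neg_mul]
    exact neg_nonpos.mpr (mul_nonneg hk (rpow_nonneg (hu0 s) α))

theorem rpow_one_sub_add_mul_eq_of_pos {t : ℝ} (ht : 0 ≤ t)
    (hu : ∀ t, 0 ≤ t → HasDerivAt u (-k * u t ^ α) t) (hpos : ∀ s ∈ Icc 0 t, 0 < u s) :
    u t ^ (1 - α) + k * (1 - α) * t = u 0 ^ (1 - α) := by
  have hg : ∀ s ∈ Icc 0 t,
      HasDerivAt (fun s => u s ^ (1 - α) + k * (1 - α) * s) 0 s := fun s hs =>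
    (((hu s hs.1).rpow_one_sub_of_neg_mul_rpow (hpos s hs)).add
      ((hasDerivAt_id s).const_mul (k * (1 - α)))).congr_deriv (by ring)
  simpa using constant_of_has_deriv_right_zero
    (fun s hs => (hg s hs).continuousAt.continuousWithinAt)
    (fun s hs => (hg s (Ico_subset_Icc_self hs)).hasDerivWithinAt) t (right_mem_Icc.mpr ht)

theorem eq_zero_of_hasDerivAt_neg_mul_rpow (hk : 0 < k) (hα : α < 1) (hu0 : ∀ t, 0 ≤ u t)
    (hu : ∀ t, 0 ≤ t → HasDerivAt u (-k * u t ^ α) t) (t : ℝ)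
    (ht : u 0 ^ (1 - α) / (k * (1 - α)) ≤ t) : u t = 0 := by
  have hrate : 0 < k * (1 - α) := mul_pos hk (sub_pos.mpr hα)
  have ht0 : 0 ≤ t := (div_nonneg (rpow_nonneg (hu0 0) _) hrate.le).trans ht
  by_contra hne
  have hpos : ∀ s ∈ Icc 0 t, 0 < u s := fun s hs =>
    ((hu0 t).lt_of_ne (Ne.symm hne)).trans_le
      (antitoneOn_of_hasDerivAt_neg_mul_rpow hk.le hu0 hu hs.1 ht0 hs.2)
  have hlin := rpow_one_sub_add_mul_eq_of_pos ht0 hu hpos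
  have hend : 0 < u t ^ (1 - α) := rpow_pos_of_pos (hpos t (right_mem_Icc.mpr ht0)) _
  rw [div_le_iff₀ hrate] at ht
  linarith

end NegMulRpow

/-- Finite-time convergence of the orientation error: under
`θ' = -k·sign(θ-φ)·|θ-φ|^α + φ'`, the angle `θ` reaches `φ` by time
`|θ(0)-φ(0)|^(1-α)/(k(1-α))`. -/
theorem stmt_5 (k α : ℝ) (hk : 0 < k) (hα0 : 0 < α) (hα1 : α < 1)
    (φ : ℝ → ℝ) (hφ : ∀ t, 0 ≤ t → DifferentiableAt ℝ φ t)
    (θ : ℝ → ℝ)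
    (hθ : ∀ t, 0 ≤ t →
      HasDerivAt θ (-k * Real.sign (θ t - φ t) * |θ t - φ t| ^ α + deriv φ t) t) :
    ∀ t, |θ 0 - φ 0| ^ (1 - α) / (k * (1 - α)) ≤ t → θ t = φ t := by
  have herr : ∀ t, 0 ≤ t → HasDerivAt (fun s => θ s - φ s)
      (-k * Real.sign (θ t - φ t) * |θ t - φ t| ^ α) t := fun t ht =>
    ((hθ t ht).sub (hφ t ht).hasDerivAt).congr_deriv (by ring)
  intro t ht
  have habs := eq_zero_of_hasDerivAt_neg_mul_rpow hk hα1 (fun s => abs_nonneg (θ s - φ s))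
    (fun s hs => (herr s hs).abs_of_neg_mul_sign_mul_rpow hα0) t ht
  exact sub_eq_zero.mp (abs_eq_zero.mp habs)
end

section
/- Let k > 0, α ∈ (0,1), let r_g : [0,∞) → ℝ² be differentiable, and let r : [0,∞) → ℝ² be differentiable with r'(t) = -k·(r(t) - r_g(t))·‖r(t) - r_g(t)‖^(α-1) + r_g'(t) whenever r(t) ≠ r_g(t), and r'(t) = r_g'(t) whenever r(t) = r_g(t). Then r(t) = r_g(t) for all t ≥ ‖r(0) - r_g(0)‖^(1-α)/(k·(1-α)). -/
/-!
The error `e = r - r_g` satisfies `e' = -k ‖e‖^(α-1) e`, a radial field pointing inwards, so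
`‖e‖` is nonincreasing: if `e(t) ≠ 0` then `e ≠ 0` on all of `[0, t]`. There
`d/dt ‖e‖^(1-α) = -k (1-α)`, so `‖e‖^(1-α)` decreases linearly and would be negative at any
time `t ≥ ‖e(0)‖^(1-α) / (k (1-α))`.
-/

open Set

section RadialField

variable {E : Type*} [NormedAddCommGroup E] [InnerProductSpace ℝ E] {e : ℝ → E} {k α s t : ℝ}

theorem HasDerivAt.norm_sq_of_smul_self {a : ℝ} (he : HasDerivAt e (a • e s) s) :
    HasDerivAt (‖e ·‖ ^ 2) (2 * a * ‖e s‖ ^ 2) s := by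
  convert he.norm_sq using 1
  rw [real_inner_smul_right, real_inner_self_eq_norm_sq]
  ring

theorem HasDerivAt.norm_of_smul_self {a : ℝ} (he : HasDerivAt e (a • e s) s) (hs : e s ≠ 0) :
    HasDerivAt (‖e ·‖) (a * ‖e s‖) s := by
  have hpos : 0 < ‖e s‖ := norm_pos_iff.2 hs
  convert he.norm_sq_of_smul_self.sqrt (by positivity) using 1
  · simp only [Real.sqrt_sq (norm_nonneg _)]
  · rw [Real.sqrt_sq hpos.le]
    field_simp

theorem antitoneOn_norm_of_hasDerivAt_smul_self {a : ℝ → ℝ} (ha : ∀ s, 0 ≤ s → a s ≤ 0)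
    (he : ∀ s, 0 ≤ s → HasDerivAt e (a s • e s) s) : AntitoneOn (‖e ·‖) (Ici 0) := by
  have hderiv (s : ℝ) (hs : 0 ≤ s) := (he s hs).norm_sq_of_smul_self
  have hsq : AntitoneOn (‖e ·‖ ^ 2) (Ici 0) := by
    refine antitoneOn_of_deriv_nonpos (convex_Ici 0)
      (fun s hs => (hderiv s hs).continuousAt.continuousWithinAt) ?_ ?_ <;>
      rw [interior_Ici] <;> intro s hs
    · exact (hderiv s hs.le).differentiableAt.differentiableWithinAt
    · rw [(hderiv s hs.le).deriv]
      nlinarith [ha s hs.le, sq_nonneg ‖e s‖]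
  intro s hs u hu hsu
  exact (pow_le_pow_iff_left₀ (norm_nonneg _) (norm_nonneg _) two_ne_zero).1 (hsq hs hu hsu)

theorem HasDerivAt.norm_rpow_one_sub_of_neg_smul
    (he : HasDerivAt e ((-k * ‖e s‖ ^ (α - 1)) • e s) s) (hs : e s ≠ 0) :
    HasDerivAt (‖e ·‖ ^ (1 - α)) (-(k * (1 - α))) s := by
  have hpos : 0 < ‖e s‖ := norm_pos_iff.2 hs
  convert (he.norm_of_smul_self hs).rpow_const (p := 1 - α) (Or.inl hpos.ne') using 1
  have hexp : ‖e s‖ ^ (1 - α - 1) * ‖e s‖ ^ (α - 1) * ‖e s‖ = 1 := by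
    rw [← Real.rpow_add hpos, ← Real.rpow_add_one hpos.ne', ← Real.rpow_zero ‖e s‖]
    ring_nf
  linear_combination (k * (1 - α)) * hexp

theorem eq_zero_of_settlingTime_le (hk : 0 < k) (hα : α < 1)
    (he : ∀ s, 0 ≤ s → HasDerivAt e ((-k * ‖e s‖ ^ (α - 1)) • e s) s)
    (ht : ‖e 0‖ ^ (1 - α) / (k * (1 - α)) ≤ t) : e t = 0 := by
  set c := k * (1 - α)
  have hc : 0 < c := mul_pos hk (sub_pos.2 hα)
  have ht0 : 0 ≤ t := (div_nonneg (by positivity) hc.le).trans ht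
  by_contra het
  have hne : ∀ s ∈ Icc 0 t, e s ≠ 0 := by
    intro s hs
    have hanti := antitoneOn_norm_of_hasDerivAt_smul_self
      (fun s _ => mul_nonpos_of_nonpos_of_nonneg (neg_nonpos.2 hk.le) (by positivity)) he
    exact norm_pos_iff.1 ((norm_pos_iff.2 het).trans_le (hanti hs.1 (mem_Ici.2 ht0) hs.2))
  have hV : ∀ s ∈ Icc 0 t, HasDerivAt (fun u => ‖e u‖ ^ (1 - α) + c * u) 0 s := fun s hs =>
    (((he s hs.1).norm_rpow_one_sub_of_neg_smul (hne s hs)).add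
      ((hasDerivAt_id' s).const_mul c)).congr_deriv (by simp [c])
  have hconst : ‖e t‖ ^ (1 - α) + c * t = ‖e 0‖ ^ (1 - α) := by
    simpa using constant_of_has_deriv_right_zero
      (fun s hs => (hV s hs).continuousAt.continuousWithinAt)
      (fun s hs => (hV s (Ico_subset_Icc_self hs)).hasDerivWithinAt) t (right_mem_Icc.2 ht0)
  have hpos : 0 < ‖e t‖ ^ (1 - α) := Real.rpow_pos_of_pos (norm_pos_iff.2 het) _
  linarith [(div_le_iff₀ hc).1 ht]

end RadialField

theorem stmt_6_general (k α : ℝ) (hk : 0 < k) (hα1 : α < 1)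
    (rg : ℝ → EuclideanSpace ℝ (Fin 2)) (hrg : ∀ t, 0 ≤ t → DifferentiableAt ℝ rg t)
    (r : ℝ → EuclideanSpace ℝ (Fin 2))
    (hr : ∀ t, 0 ≤ t → r t ≠ rg t →
      HasDerivAt r ((-k * ‖r t - rg t‖ ^ (α - 1)) • (r t - rg t) + deriv rg t) t)
    (hr0 : ∀ t, 0 ≤ t → r t = rg t → HasDerivAt r (deriv rg t) t) :
    ∀ t, ‖r 0 - rg 0‖ ^ (1 - α) / (k * (1 - α)) ≤ t → r t = rg t := by
  have he : ∀ s, 0 ≤ s → HasDerivAt (fun u => r u - rg u)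
      ((-k * ‖r s - rg s‖ ^ (α - 1)) • (r s - rg s)) s := by
    intro s hs
    by_cases hrs : r s = rg s
    · exact ((hr0 s hs hrs).sub (hrg s hs).hasDerivAt).congr_deriv (by simp [hrs])
    · exact ((hr s hs hrs).sub (hrg s hs).hasDerivAt).congr_deriv (add_sub_cancel_right _ _)
  intro t ht
  exact sub_eq_zero.1 (eq_zero_of_settlingTime_le hk hα1 he ht)

/-- Finite-time trajectory tracking: if `r' = -k·(r - r_g)·‖r - r_g‖^(α-1) + r_g'`
(with `r' = r_g'` when `r = r_g`), then `r` reaches `r_g` by time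
`‖r(0)-r_g(0)‖^(1-α)/(k(1-α))`. -/
theorem stmt_6 (k α : ℝ) (hk : 0 < k) (hα0 : 0 < α) (hα1 : α < 1)
    (rg : ℝ → EuclideanSpace ℝ (Fin 2)) (hrg : ∀ t, 0 ≤ t → DifferentiableAt ℝ rg t)
    (r : ℝ → EuclideanSpace ℝ (Fin 2))
    (hr : ∀ t, 0 ≤ t → r t ≠ rg t →
      HasDerivAt r ((-k * ‖r t - rg t‖ ^ (α - 1)) • (r t - rg t) + deriv rg t) t)
    (hr0 : ∀ t, 0 ≤ t → r t = rg t → HasDerivAt r (deriv rg t) t) :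
    ∀ t, ‖r 0 - rg 0‖ ^ (1 - α) / (k * (1 - α)) ≤ t → r t = rg t :=
  stmt_6_general k α hk hα1 rg hrg r hr hr0
end

section
/- Let n ≥ 2, τ, o ∈ ℝⁿ, d_c > 0 with ‖o - τ‖ > 2·d_c, and ε > 1/d_c. Define B(x) = ‖x - τ‖² / (‖x - o‖ - d_c + 1/ε). Then for every x ∈ ℝⁿ with ‖x - o‖ > d_c, the gradient ∇B(x) equals 0 if and only if x = τ or x = τ + 2·(‖o - τ‖ + d_c - 1/ε)·(o - τ)/‖o - τ‖. -/
/-!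
With `c = d_c - 1/ε ∈ (0, d_c)` and `g(x) = ‖x - o‖ - c > 0` on the safe region, the quotient
rule gives `∇B(x) = g⁻² (2 g (x - τ) - (‖x - τ‖² / ‖x - o‖) (x - o))`. Away from `τ`, a zero of
the gradient makes `x - τ` and `x - o` positively parallel, and comparing norms gives
`‖x - τ‖ = 2g`. Then `o - τ = (x - τ) - (x - o)` is a multiple of `x - τ` of norm
`|‖x - o‖ - 2c|`; the sign `‖x - o‖ = 2c - ‖o - τ‖` would put `x` within `c` of `o`, so
`‖x - o‖ = ‖o - τ‖ + 2c`, which pins `x` down on the ray from `τ` through `o`.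
-/

open InnerProductSpace

noncomputable def barrier {E : Type*} [NormedAddCommGroup E] (τ o : E) (c : ℝ) (y : E) : ℝ :=
  ‖y - τ‖ ^ 2 / (‖y - o‖ - c)

section Critical

variable {E : Type*} [NormedAddCommGroup E] [NormedSpace ℝ E]

theorem barrier_critical_of_eq {τ o : E} {c : ℝ} (hc : 0 ≤ c) (hτo : τ ≠ o)
    {x : E} (hx : x = τ + (2 * (‖o - τ‖ + c) / ‖o - τ‖) • (o - τ)) :
    (2 * (‖x - o‖ - c)) • (x - τ) = (‖x - τ‖ ^ 2 / ‖x - o‖) • (x - o) := by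
  set r := ‖o - τ‖ with hr
  have hr0 : 0 < r := norm_pos_iff.2 (sub_ne_zero.2 hτo.symm)
  have hxτ : x - τ = (2 * (r + c) / r) • (o - τ) := by rw [hx]; abel
  have hxo : x - o = ((r + 2 * c) / r) • (o - τ) :=
    calc x - o = (2 * (r + c) / r - 1) • (o - τ) := by rw [sub_smul, one_smul, ← hxτ]; abel
      _ = ((r + 2 * c) / r) • (o - τ) := by congr 1; field_simp; ring
  have hnxτ : ‖x - τ‖ = 2 * (r + c) := by
    rw [hxτ, norm_smul_of_nonneg (by positivity), ← hr]; field_simp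
  have hnxo : ‖x - o‖ = r + 2 * c := by
    rw [hxo, norm_smul_of_nonneg (by positivity), ← hr]; field_simp
  rw [hnxτ, hnxo, hxτ, hxo, smul_smul, smul_smul]
  congr 1
  field_simp
  ring

theorem eq_of_barrier_critical {τ o x : E} {c : ℝ} (hc : 0 ≤ c) (hco : c < ‖o - τ‖)
    (hx : c < ‖x - o‖)
    (h : (2 * (‖x - o‖ - c)) • (x - τ) = (‖x - τ‖ ^ 2 / ‖x - o‖) • (x - o)) :
    x = τ ∨ x = τ + (2 * (‖o - τ‖ + c) / ‖o - τ‖) • (o - τ) := by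
  rcases eq_or_ne x τ with rfl | hxτ
  · exact Or.inl rfl
  right
  set α := ‖x - τ‖ with hα
  set β := ‖x - o‖ with hβ
  set r := ‖o - τ‖ with hr
  have hα0 : 0 < α := norm_pos_iff.2 (sub_ne_zero.2 hxτ)
  have hβ0 : 0 < β := hc.trans_lt hx
  have hαβ : α = 2 * (β - c) := by
    have hn := congrArg norm h
    rw [norm_smul_of_nonneg (by linarith), norm_smul_of_nonneg (by positivity), ← hα, ← hβ,
      div_mul_cancel₀ _ hβ0.ne', sq] at hn
    exact (mul_right_cancel₀ hα0.ne' hn).symm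
  have hdir : β • (x - τ) = α • (x - o) := by
    rw [← hαβ] at h
    have h' := congrArg ((β / α) • ·) h
    simp only [smul_smul] at h'
    convert h' using 2 <;> field_simp
  have hv : α • (o - τ) = (β - 2 * c) • (x - τ) := by
    rw [show o - τ = (x - τ) - (x - o) by abel, smul_sub, ← hdir, ← sub_smul, hαβ]
    ring_nf
  have hrβ : r = |β - 2 * c| := by
    have hn := congrArg norm hv
    rw [norm_smul_of_nonneg hα0.le, norm_smul, Real.norm_eq_abs, ← hα, ← hr] at hn
    exact mul_left_cancel₀ hα0.ne' (hn.trans (mul_comm _ _))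
  have hβr : β - 2 * c = r := by
    rcases (abs_eq (hr ▸ norm_nonneg _)).1 hrβ.symm with h | h
    · exact h
    · linarith
  have hxτ' : x - τ = (α / r) • (o - τ) := by
    rw [div_eq_inv_mul, mul_smul, hv, hβr, inv_smul_smul₀ (by linarith)]
  rw [show 2 * (r + c) = α by linarith]
  exact sub_eq_iff_eq_add'.mp hxτ'

theorem barrier_critical_iff {τ o x : E} {c : ℝ} (hc : 0 ≤ c) (hco : c < ‖o - τ‖)
    (hx : c < ‖x - o‖) :
    (2 * (‖x - o‖ - c)) • (x - τ) = (‖x - τ‖ ^ 2 / ‖x - o‖) • (x - o) ↔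
      x = τ ∨ x = τ + (2 * (‖o - τ‖ + c) / ‖o - τ‖) • (o - τ) := by
  refine ⟨eq_of_barrier_critical hc hco hx, ?_⟩
  rintro (rfl | hx')
  · simp
  · refine barrier_critical_of_eq hc ?_ hx'
    rintro rfl
    simp only [sub_self, norm_zero] at hco
    linarith

end Critical

section Gradient

variable {F : Type*} [NormedAddCommGroup F] [InnerProductSpace ℝ F] [CompleteSpace F]

theorem HasGradientAt.div {f g : F → ℝ} {f' g' x : F} (hf : HasGradientAt f f' x)
    (hg : HasGradientAt g g' x) (hx : g x ≠ 0) :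
    HasGradientAt (fun y => f y / g y) ((g x ^ 2)⁻¹ • (g x • f' - f x • g')) x := by
  rw [hasGradientAt_iff_hasFDerivAt] at *
  simp only [div_eq_mul_inv]
  refine (hf.mul ((hasDerivAt_inv hx).comp_hasFDerivAt x hg)).congr_fderiv ?_
  ext v
  simp only [add_apply, smul_apply, sub_apply, neg_apply, Function.comp_apply,
    toDual_apply_apply, map_smul, map_sub, smul_eq_mul, neg_smul, smul_neg]
  field_simp
  ring

theorem hasGradientAt_norm_sub_sq (τ x : F) :
    HasGradientAt (fun y => ‖y - τ‖ ^ 2) (2 • (x - τ)) x := by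
  have h := ((hasFDerivAt_id x).sub_const τ).norm_sq
  simp only [id] at h
  refine h.congr_fderiv ?_
  ext v
  simp

theorem hasGradientAt_norm_sub {o x : F} (hx : x ≠ o) :
    HasGradientAt (fun y => ‖y - o‖) (‖x - o‖⁻¹ • (x - o)) x := by
  have hne : ‖x - o‖ ^ 2 ≠ 0 := by simpa [sub_eq_zero] using hx
  have h := (hasGradientAt_norm_sub_sq o x).hasFDerivAt.sqrt hne
  simp only [Real.sqrt_sq (norm_nonneg _)] at h
  refine h.congr_fderiv ?_
  ext v
  simp only [one_div, map_nsmul, smul_apply, toDual_apply_apply, nsmul_eq_mul, Nat.cast_ofNat,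
    smul_eq_mul, map_smul]
  field_simp

theorem hasGradientAt_barrier {τ o x : F} {c : ℝ} (hxo : x ≠ o) (hc : ‖x - o‖ ≠ c) :
    HasGradientAt (barrier τ o c) (((‖x - o‖ - c) ^ 2)⁻¹ •
      ((2 * (‖x - o‖ - c)) • (x - τ) - (‖x - τ‖ ^ 2 / ‖x - o‖) • (x - o))) x := by
  convert (hasGradientAt_norm_sub_sq τ x).div
    ((hasGradientAt_norm_sub hxo).sub_const c) (sub_ne_zero.2 hc) using 1
  · rfl
  · rw [div_eq_mul_inv]
    module

theorem gradient_barrier_eq_zero_iff {τ o x : F} {c : ℝ} (hc : 0 ≤ c) (hco : c < ‖o - τ‖)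
    (hx : c < ‖x - o‖) :
    gradient (barrier τ o c) x = 0 ↔
      x = τ ∨ x = τ + (2 * (‖o - τ‖ + c) / ‖o - τ‖) • (o - τ) := by
  have hxo : x ≠ o := by
    rintro rfl
    simp only [sub_self, norm_zero] at hx
    linarith
  have hden : ((‖x - o‖ - c) ^ 2)⁻¹ ≠ 0 := by
    have : ‖x - o‖ - c ≠ 0 := by linarith
    positivity
  rw [(hasGradientAt_barrier hxo hx.ne').gradient, smul_eq_zero_iff_right hden, sub_eq_zero,
    barrier_critical_iff hc hco hx]

end Gradient

theorem stmt_8_general (n : ℕ) (τ o : EuclideanSpace ℝ (Fin n))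
    (dc ε : ℝ) (hdc : 0 < dc) (hsep : 2 * dc < ‖o - τ‖) (hε : 1 / dc < ε)
    (B : EuclideanSpace ℝ (Fin n) → ℝ)
    (hB : ∀ y, B y = ‖y - τ‖ ^ 2 / (‖y - o‖ - dc + 1 / ε)) :
    ∀ x : EuclideanSpace ℝ (Fin n), dc < ‖x - o‖ →
      (gradient B x = 0 ↔
        x = τ ∨ x = τ + (2 * (‖o - τ‖ + dc - 1 / ε) / ‖o - τ‖) • (o - τ)) := by
  intro x hx
  have hε0 : 0 < ε := (one_div_pos.2 hdc).trans hε
  have hεdc : 1 / ε < dc := (one_div_lt hdc hε0).1 hε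
  have hε0' : 0 < 1 / ε := one_div_pos.2 hε0
  have hB' : B = barrier τ o (dc - 1 / ε) := funext fun y => by rw [hB, barrier, sub_add]
  rw [hB', add_sub_assoc]
  exact gradient_barrier_eq_zero_iff (by linarith) (by linarith) (by linarith)

/-- Critical points of the barrier function: on the safe region `‖x - o‖ > d_c`,
the gradient of `B(x) = ‖x-τ‖²/(‖x-o‖-d_c+1/ε)` vanishes exactly at the goal `τ`
and at the point `τ + 2(‖o-τ‖+d_c-1/ε)/‖o-τ‖ · (o-τ)`. -/
theorem stmt_8 (n : ℕ) (hn : 2 ≤ n) (τ o : EuclideanSpace ℝ (Fin n))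
    (dc ε : ℝ) (hdc : 0 < dc) (hsep : 2 * dc < ‖o - τ‖) (hε : 1 / dc < ε)
    (B : EuclideanSpace ℝ (Fin n) → ℝ)
    (hB : ∀ y, B y = ‖y - τ‖ ^ 2 / (‖y - o‖ - dc + 1 / ε)) :
    ∀ x : EuclideanSpace ℝ (Fin n), dc < ‖x - o‖ →
      (gradient B x = 0 ↔
        x = τ ∨ x = τ + (2 * (‖o - τ‖ + dc - 1 / ε) / ‖o - τ‖) • (o - τ)) :=
  stmt_8_general n τ o dc ε hdc hsep hε B hB
end

section
/- Let n ≥ 2, τ, o ∈ ℝⁿ, d_c > 0 with ‖o - τ‖ > 2·d_c, ε > 1/d_c, and define B(x) = ‖x - τ‖² / (‖x - o‖ - d_c + 1/ε). Let r > 0 and let D ⊆ ℝⁿ be a compact set with τ ∈ D, D ⊆ {x : ‖x - o‖ > d_c}, and D disjoint from the set {x : there exists θ ≥ 1 with ‖x - (τ + θ·(o - τ))‖ < r}. Then there exists c > 0 such that ‖∇B(x)‖ ≥ c·‖x - τ‖ for all x ∈ D. -/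
/-!
Write `g(x) = ‖x - o‖ + k` with `k = 1/ε - d_c`. Then
`∇B(x) = g⁻² (2g (x - τ) - (‖x - τ‖² / ‖x - o‖) (x - o))`, whose norm is at least
`‖x - τ‖ (2g - ‖x - τ‖) / g²`; since `2g - ‖x - τ‖` and `g` are comparable to `‖o - τ‖ + k` near `τ`,
this is a linear lower bound on a ball around `τ`. Away from `τ`, `∇B(x) = 0` forces `2g = ‖x - τ‖`
and `x - τ`, `x - o` positively parallel, so `x` lies on the line through `τ` and `o` outside the
segment: either on the excluded ray, or behind `τ`, where `‖x - o‖ = ‖x - τ‖ + ‖o - τ‖` makes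
`2g > ‖x - τ‖`. Hence `‖∇B(x)‖ / ‖x - τ‖` is continuous and positive on the compact part of `D`
outside that ball, so it has a positive minimum there.
-/

open Set

theorem exists_pos_mul_dist_le_of_isCompact {α : Type*} [MetricSpace α] {f : α → ℝ}
    {D : Set α} {a : α} (hD : IsCompact D) (hf : ContinuousOn f D)
    (hpos : ∀ x ∈ D, x ≠ a → 0 < f x) {δ c₀ : ℝ} (hδ : 0 < δ) (hc₀ : 0 < c₀)
    (hnear : ∀ x ∈ D, dist x a < δ → c₀ * dist x a ≤ f x) :
    ∃ c, 0 < c ∧ ∀ x ∈ D, c * dist x a ≤ f x := by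
  set K := D ∩ {x | δ ≤ dist x a}
  have hdist : Continuous fun x => dist x a := continuous_id.dist continuous_const
  have hK : IsCompact K := hD.inter_right (isClosed_le continuous_const hdist)
  have hdistK : ∀ x ∈ K, 0 < dist x a := fun x hx => hδ.trans_le hx.2
  obtain ⟨m, hm, hmK⟩ := hK.exists_forall_le' (a := 0)
    ((hf.mono inter_subset_left).div hdist.continuousOn fun x hx => (hdistK x hx).ne')
    fun x hx => div_pos (hpos x hx.1 (dist_pos.1 (hdistK x hx))) (hdistK x hx)
  refine ⟨min c₀ m, lt_min hc₀ hm, fun x hx => ?_⟩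
  rcases lt_or_ge (dist x a) δ with hxδ | hxδ
  · exact (mul_le_mul_of_nonneg_right (min_le_left _ _) dist_nonneg).trans (hnear x hx hxδ)
  · have hxK : x ∈ K := ⟨hx, hxδ⟩
    have hmx : m ≤ f x / dist x a := hmK x hxK
    rw [le_div_iff₀ (hdistK x hxK)] at hmx
    exact (mul_le_mul_of_nonneg_right (min_le_right _ _) dist_nonneg).trans hmx

theorem exists_eq_add_smul_or_norm_sub_eq_of_sub_eq_smul {E : Type*} [NormedAddCommGroup E]
    [NormedSpace ℝ E] {τ o x : E} {s : ℝ} (hs : 0 < s) (h : x - τ = s • (x - o)) :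
    (∃ θ : ℝ, 1 ≤ θ ∧ x = τ + θ • (o - τ)) ∨ ‖x - o‖ = ‖x - τ‖ + ‖o - τ‖ := by
  rcases le_or_gt s 1 with hs1 | hs1
  · right
    have hoτ : o - τ = (s - 1) • (x - o) := by linear_combination (norm := module) h
    rw [h, hoτ, norm_smul, norm_smul, Real.norm_of_nonneg hs.le,
      Real.norm_of_nonpos (by linarith)]
    ring
  · left
    refine ⟨s / (s - 1), by rw [le_div_iff₀ (by linarith)]; linarith, eq_add_of_sub_eq' ?_⟩
    have hxτ : (s - 1) • (x - τ) = s • (o - τ) := by linear_combination (norm := module) -h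
    rw [div_eq_inv_mul, mul_smul, ← hxτ, inv_smul_smul₀ (by linarith)]

section Barrier

variable {E : Type*} [NormedAddCommGroup E] [InnerProductSpace ℝ E]

theorem hasFDerivAt_norm_sub {o x : E} (hx : x ≠ o) :
    HasFDerivAt (fun y => ‖y - o‖) (‖x - o‖⁻¹ • innerSL ℝ (x - o)) x := by
  have hsq : HasFDerivAt (fun y => ‖y - o‖ ^ 2) (2 • innerSL ℝ (x - o)) x := by
    simpa using ((hasFDerivAt_id x).sub_const o).norm_sq
  have hpos : 0 < ‖x - o‖ := norm_pos_iff.2 (sub_ne_zero.2 hx)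
  convert hsq.sqrt (by positivity) using 1
  · simp only [Real.sqrt_sq (norm_nonneg _)]
  · ext w
    simp only [map_sub, smul_apply, sub_apply,
      coe_innerSL_apply, smul_eq_mul, Real.sqrt_sq hpos.le, nsmul_eq_mul, Nat.cast_ofNat]
    field_simp

noncomputable def barrierGradient (τ o : E) (k : ℝ) (x : E) : E :=
  ((‖x - o‖ + k) ^ 2)⁻¹ •
    ((2 * (‖x - o‖ + k)) • (x - τ) - (‖x - τ‖ ^ 2 / ‖x - o‖) • (x - o))

theorem hasGradientAt_barrier_s9 [CompleteSpace E] {τ o x : E} {k : ℝ} (hxo : x ≠ o)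
    (hk : ‖x - o‖ + k ≠ 0) :
    HasGradientAt (fun y => ‖y - τ‖ ^ 2 / (‖y - o‖ + k)) (barrierGradient τ o k x) x := by
  have hnum : HasFDerivAt (fun y => ‖y - τ‖ ^ 2) (2 • innerSL ℝ (x - τ)) x := by
    simpa using ((hasFDerivAt_id x).sub_const τ).norm_sq
  have hden : HasFDerivAt (fun y => (‖y - o‖ + k)⁻¹)
      (-((‖x - o‖ + k) ^ 2)⁻¹ • ‖x - o‖⁻¹ • innerSL ℝ (x - o)) x :=
    (hasDerivAt_inv hk).comp_hasFDerivAt x ((hasFDerivAt_norm_sub hxo).add_const k)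
  have hxo' : ‖x - o‖ ≠ 0 := norm_ne_zero_iff.2 (sub_ne_zero.2 hxo)
  rw [hasGradientAt_iff_hasFDerivAt]
  simp_rw [div_eq_mul_inv]
  refine (hnum.fun_mul hden).congr_fderiv (ContinuousLinearMap.ext fun w => ?_)
  simp only [barrierGradient, InnerProductSpace.toDual_apply_apply, map_sub, map_smul, neg_smul,
    smul_neg, add_apply, sub_apply,
    smul_apply, neg_apply, coe_innerSL_apply, smul_eq_mul,
    nsmul_eq_mul, Nat.cast_ofNat]
  field_simp
  ring

theorem continuousAt_barrierGradient {τ o x : E} {k : ℝ} (hxo : x ≠ o) (hk : ‖x - o‖ + k ≠ 0) :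
    ContinuousAt (barrierGradient τ o k) x := by
  have hxo' : ‖x - o‖ ≠ 0 := norm_ne_zero_iff.2 (sub_ne_zero.2 hxo)
  unfold barrierGradient
  fun_prop (disch := simp [*])

theorem le_norm_barrierGradient {τ o x : E} (k : ℝ) (hxo : x ≠ o) :
    ‖x - τ‖ * (2 * (‖x - o‖ + k) - ‖x - τ‖) / (‖x - o‖ + k) ^ 2 ≤ ‖barrierGradient τ o k x‖ := by
  have hb : ‖x - o‖ ≠ 0 := norm_ne_zero_iff.2 (sub_ne_zero.2 hxo)
  have hpull : ‖(‖x - τ‖ ^ 2 / ‖x - o‖) • (x - o)‖ = ‖x - τ‖ ^ 2 := by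
    rw [norm_smul, Real.norm_of_nonneg (by positivity), div_mul_cancel₀ _ hb]
  have hN : ‖x - τ‖ * (2 * (‖x - o‖ + k) - ‖x - τ‖) ≤
      ‖(2 * (‖x - o‖ + k)) • (x - τ) - (‖x - τ‖ ^ 2 / ‖x - o‖) • (x - o)‖ := by
    refine le_trans ?_ (norm_sub_norm_le _ _)
    rw [norm_smul (2 * _), hpull, Real.norm_eq_abs]
    nlinarith [le_abs_self (2 * (‖x - o‖ + k)), norm_nonneg (x - τ)]
  rw [barrierGradient, norm_smul, norm_inv, norm_pow, Real.norm_eq_abs, sq_abs, div_eq_inv_mul]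
  exact mul_le_mul_of_nonneg_left hN (by positivity)

theorem inv_mul_norm_sub_le_norm_barrierGradient {τ o x : E} {k : ℝ} (hxo : x ≠ o)
    (hk : 0 < ‖o - τ‖ + k) (hx : ‖x - τ‖ ≤ (‖o - τ‖ + k) / 3) :
    (4 * (‖o - τ‖ + k))⁻¹ * ‖x - τ‖ ≤ ‖barrierGradient τ o k x‖ := by
  have h₁ : ‖o - τ‖ ≤ ‖x - τ‖ + ‖x - o‖ := by simpa using norm_sub_le (x - τ) (x - o)
  have h₂ : ‖x - o‖ ≤ ‖x - τ‖ + ‖o - τ‖ := by simpa using norm_sub_le (x - τ) (o - τ)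
  have hg : 0 < ‖x - o‖ + k := by linarith
  refine le_trans ?_ (le_norm_barrierGradient k hxo)
  calc (4 * (‖o - τ‖ + k))⁻¹ * ‖x - τ‖
      = ‖x - τ‖ * (‖o - τ‖ + k) / (2 * (‖o - τ‖ + k)) ^ 2 := by field_simp; ring
    _ ≤ ‖x - τ‖ * (2 * (‖x - o‖ + k) - ‖x - τ‖) / (‖x - o‖ + k) ^ 2 :=
      div_le_div₀ (by nlinarith) (by gcongr; linarith) (by positivity)
        (pow_le_pow_left₀ hg.le (by linarith) 2)

theorem barrierGradient_ne_zero {τ o x : E} {k : ℝ} (hxτ : x ≠ τ) (hxo : x ≠ o)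
    (hk : 0 < ‖x - o‖ + k) (hLk : 0 ≤ ‖o - τ‖ + k)
    (hray : ∀ θ : ℝ, 1 ≤ θ → x ≠ τ + θ • (o - τ)) :
    barrierGradient τ o k x ≠ 0 := by
  intro h0
  have hu : 0 < ‖x - τ‖ := norm_pos_iff.2 (sub_ne_zero.2 hxτ)
  have hb : 0 < ‖x - o‖ := norm_pos_iff.2 (sub_ne_zero.2 hxo)
  have hN : (2 * (‖x - o‖ + k)) • (x - τ) = (‖x - τ‖ ^ 2 / ‖x - o‖) • (x - o) := by
    rw [barrierGradient, smul_eq_zero, sub_eq_zero] at h0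
    exact h0.resolve_left (by positivity)
  have hnorm : 2 * (‖x - o‖ + k) = ‖x - τ‖ := by
    have := congrArg norm hN
    rw [norm_smul, norm_smul, Real.norm_of_nonneg (by positivity),
      Real.norm_of_nonneg (by positivity), div_mul_cancel₀ _ hb.ne', sq] at this
    exact mul_right_cancel₀ hu.ne' this
  have hpar : x - τ = (‖x - τ‖ / ‖x - o‖) • (x - o) := by
    rw [hnorm, sq, mul_div_assoc, mul_smul] at hN
    exact smul_right_injective E hu.ne' hN
  rcases exists_eq_add_smul_or_norm_sub_eq_of_sub_eq_smul (by positivity) hpar with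
    ⟨θ, hθ, hx⟩ | hbehind
  · exact hray θ hθ hx
  · linarith

end Barrier

theorem stmt_9_general (n : ℕ) (τ o : EuclideanSpace ℝ (Fin n))
    (dc ε : ℝ) (hdc : 0 < dc) (hsep : 2 * dc < ‖o - τ‖) (hε : 1 / dc < ε)
    (B : EuclideanSpace ℝ (Fin n) → ℝ)
    (hB : ∀ y, B y = ‖y - τ‖ ^ 2 / (‖y - o‖ - dc + 1 / ε))
    (r : ℝ) (hr : 0 < r)
    (D : Set (EuclideanSpace ℝ (Fin n))) (hDc : IsCompact D)
    (hDsafe : D ⊆ {x | dc < ‖x - o‖})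
    (hDray : Disjoint D {x | ∃ θ : ℝ, 1 ≤ θ ∧ ‖x - (τ + θ • (o - τ))‖ < r}) :
    ∃ c : ℝ, 0 < c ∧ ∀ x ∈ D, c * ‖x - τ‖ ≤ ‖gradient B x‖ := by
  have hε' : 0 < 1 / ε := one_div_pos.2 ((one_div_pos.2 hdc).trans hε)
  set k := 1 / ε - dc with hk_def
  have hLk : 0 < ‖o - τ‖ + k := by linarith
  have hk : ∀ x ∈ D, 0 < ‖x - o‖ + k := fun x hx => by
    linarith [show dc < ‖x - o‖ from hDsafe hx]
  have hxo : ∀ x ∈ D, x ≠ o := fun x hx =>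
    sub_ne_zero.1 (norm_pos_iff.1 (hdc.trans (hDsafe hx)))
  have hB' : B = fun y => ‖y - τ‖ ^ 2 / (‖y - o‖ + k) := funext fun y => by
    rw [hB, hk_def]
    ring
  have hgrad : ∀ x ∈ D, gradient B x = barrierGradient τ o k x := fun x hx =>
    hB' ▸ (hasGradientAt_barrier_s9 (hxo x hx) (hk x hx).ne').gradient
  have hray : ∀ x ∈ D, ∀ θ : ℝ, 1 ≤ θ → x ≠ τ + θ • (o - τ) := fun x hx θ hθ h =>
    disjoint_left.1 hDray hx ⟨θ, hθ, by rwa [← h, sub_self, norm_zero]⟩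
  simp only [← dist_eq_norm]
  refine exists_pos_mul_dist_le_of_isCompact hDc ?_ ?_ (by positivity : 0 < (‖o - τ‖ + k) / 3)
    (by positivity : 0 < (4 * (‖o - τ‖ + k))⁻¹) ?_
  · refine ContinuousOn.norm (ContinuousOn.congr (fun x hx => ?_) hgrad)
    exact (continuousAt_barrierGradient (hxo x hx) (hk x hx).ne').continuousWithinAt
  · intro x hx hxτ
    rw [hgrad x hx]
    exact norm_pos_iff.2 (barrierGradient_ne_zero hxτ (hxo x hx) (hk x hx) hLk.le (hray x hx))
  · intro x hx hxδ
    rw [hgrad x hx, dist_eq_norm]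
    exact inv_mul_norm_sub_le_norm_barrierGradient (hxo x hx) hLk (dist_eq_norm x τ ▸ hxδ).le

/-- Lower bound on the barrier gradient: on a compact set `D` containing `τ`,
contained in the safe region, and avoiding an `r`-neighborhood of the ray from
`τ` through `o` starting at `o`, there is `c > 0` with `‖∇B(x)‖ ≥ c‖x-τ‖`. -/
theorem stmt_9 (n : ℕ) (hn : 2 ≤ n) (τ o : EuclideanSpace ℝ (Fin n))
    (dc ε : ℝ) (hdc : 0 < dc) (hsep : 2 * dc < ‖o - τ‖) (hε : 1 / dc < ε)
    (B : EuclideanSpace ℝ (Fin n) → ℝ)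
    (hB : ∀ y, B y = ‖y - τ‖ ^ 2 / (‖y - o‖ - dc + 1 / ε))
    (r : ℝ) (hr : 0 < r)
    (D : Set (EuclideanSpace ℝ (Fin n))) (hDc : IsCompact D) (hτD : τ ∈ D)
    (hDsafe : D ⊆ {x | dc < ‖x - o‖})
    (hDray : Disjoint D {x | ∃ θ : ℝ, 1 ≤ θ ∧ ‖x - (τ + θ • (o - τ))‖ < r}) :
    ∃ c : ℝ, 0 < c ∧ ∀ x ∈ D, c * ‖x - τ‖ ≤ ‖gradient B x‖ :=
  stmt_9_general n τ o dc ε hdc hsep hε B hB r hr D hDc hDsafe hDray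
end

section
/- Let n ≥ 1, τ, o ∈ ℝⁿ, d_c > 0 with ‖o - τ‖ > 2·d_c, let M > 0, and let ε > M/d_c². Define B(x) = ‖x - τ‖² / (‖x - o‖ - d_c + 1/ε). Then for every x ∈ ℝⁿ with ‖x - o‖ - d_c + 1/ε > 0, the inequality B(x) ≤ M implies ‖x - o‖ > d_c. -/
/-- Safety from sublevel sets of the barrier: for `ε > M/d_c²`, any point with a
positive barrier denominator and `B(x) ≤ M` satisfies `‖x - o‖ > d_c`. -/
theorem stmt_10 (n : ℕ) (hn : 1 ≤ n) (τ o : EuclideanSpace ℝ (Fin n))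
    (dc M ε : ℝ) (hdc : 0 < dc) (hsep : 2 * dc < ‖o - τ‖) (hM : 0 < M)
    (hε : M / dc ^ 2 < ε)
    (B : EuclideanSpace ℝ (Fin n) → ℝ)
    (hB : ∀ y, B y = ‖y - τ‖ ^ 2 / (‖y - o‖ - dc + 1 / ε)) :
    ∀ x : EuclideanSpace ℝ (Fin n),
      0 < ‖x - o‖ - dc + 1 / ε → B x ≤ M → dc < ‖x - o‖ := by
  intro x hD hBx
  by_contra h
  push_neg at h
  have hεpos : 0 < ε := lt_trans (div_pos hM (pow_pos hdc 2)) hε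
  -- 1/ε < dc^2 / M
  have hinv : 1 / ε < dc ^ 2 / M := by
    rw [div_lt_div_iff₀ hεpos hM] at *
    rw [div_lt_iff₀ (pow_pos hdc 2)] at hε
    nlinarith
  -- numerator bound
  have hnum : ‖x - τ‖ ^ 2 ≤ M * (‖x - o‖ - dc + 1 / ε) := by
    have := hBx
    rw [hB x, div_le_iff₀ hD] at this
    linarith
  -- triangle: ‖o - τ‖ ≤ ‖x - o‖ + ‖x - τ‖  (since o - τ = (o - x) + (x - τ))
  have htri : ‖o - τ‖ ≤ ‖x - o‖ + ‖x - τ‖ := by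
    have : o - τ = (o - x) + (x - τ) := by abel
    rw [this]
    calc ‖(o - x) + (x - τ)‖ ≤ ‖o - x‖ + ‖x - τ‖ := norm_add_le _ _
      _ = ‖x - o‖ + ‖x - τ‖ := by rw [norm_sub_rev]
  have hxτ : dc < ‖x - τ‖ := by linarith
  -- D ≤ 1/ε since ‖x-o‖ ≤ dc
  have : M * (‖x - o‖ - dc + 1 / ε) ≤ M * (1 / ε) := by nlinarith
  have : M * (1 / ε) < dc ^ 2 := by
    rw [lt_div_iff₀ hM] at hinv; nlinarith
  nlinarith
end

section
/- Let n ≥ 1, τ, o ∈ ℝⁿ, d_c > 0, ε > 0, k₁ > 0, α ∈ (0,1), and c > 0, and define B(x) = ‖x - τ‖² / (‖x - o‖ - d_c + 1/ε). Let x ∈ ℝⁿ with ‖x - o‖ > d_c be a point where B is differentiable and suppose ‖∇B(x)‖ ≥ c·‖x - τ‖. Then ⟨∇B(x), -k₁·∇B(x)·‖∇B(x)‖^(α-1)⟩ ≤ -K·B(x)^β, where β = (1+α)/2 and K = k₁·c^(1+α)/ε^β (with the left-hand side interpreted as 0 when ∇B(x) = 0, in which case x = τ and B(x) = 0). -/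
/-!
Along the controller, `⟨∇B, u⟩ = -k₁‖∇B‖^(1+α)`. On the safe set the denominator of `B` is at
least `1/ε`, so `B(x) ≤ ε‖x - τ‖²` and hence `B(x)^β ≤ ε^β ‖x - τ‖^(1+α)`; the gradient bound
`c‖x - τ‖ ≤ ‖∇B(x)‖` then turns this into `K·B(x)^β ≤ k₁‖∇B(x)‖^(1+α)`.
-/

open Real

lemma inner_smul_rpow_self {E : Type*} [NormedAddCommGroup E] [InnerProductSpace ℝ E]
    (g : E) {k α : ℝ} (hα : 1 + α ≠ 0) :
    inner ℝ g ((-k * ‖g‖ ^ (α - 1)) • g) = -k * ‖g‖ ^ (1 + α) := by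
  rw [real_inner_smul_right, real_inner_self_eq_norm_sq, mul_assoc, ← rpow_two,
    ← rpow_add' (norm_nonneg g) (by contrapose! hα; linarith : α - 1 + 2 ≠ 0)]
  ring_nf

lemma div_add_one_div_le_mul {a s ε : ℝ} (ha : 0 ≤ a) (hε : 0 < ε) (hs : 0 ≤ s) :
    a / (s + 1 / ε) ≤ ε * a := by
  calc a / (s + 1 / ε) ≤ a / (1 / ε) := by gcongr; linarith
    _ = ε * a := by rw [div_div_eq_mul_div, div_one, mul_comm]

lemma rpow_half_le_of_le_mul_sq {b ε t p : ℝ} (hb : 0 ≤ b) (hε : 0 ≤ ε) (ht : 0 ≤ t)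
    (hp : 0 ≤ p) (h : b ≤ ε * t ^ 2) : b ^ (p / 2) ≤ ε ^ (p / 2) * t ^ p := by
  calc b ^ (p / 2) ≤ (ε * t ^ 2) ^ (p / 2) := by gcongr
    _ = ε ^ (p / 2) * t ^ p := by
      rw [mul_rpow hε (sq_nonneg t), ← rpow_two, ← rpow_mul ht]
      ring_nf

lemma mul_rpow_half_le_of_le_mul_sq {k c ε b t G p : ℝ} (hk : 0 ≤ k) (hc : 0 ≤ c) (hε : 0 < ε)
    (hp : 0 ≤ p) (hb : 0 ≤ b) (ht : 0 ≤ t) (hbt : b ≤ ε * t ^ 2) (htG : c * t ≤ G) :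
    k * c ^ p / ε ^ (p / 2) * b ^ (p / 2) ≤ k * G ^ p := by
  have hεp : 0 < ε ^ (p / 2) := rpow_pos_of_pos hε _
  calc k * c ^ p / ε ^ (p / 2) * b ^ (p / 2)
      ≤ k * c ^ p / ε ^ (p / 2) * (ε ^ (p / 2) * t ^ p) := by
        gcongr; exact rpow_half_le_of_le_mul_sq hb hε.le ht hp hbt
    _ = k * (c * t) ^ p := by rw [mul_rpow hc ht]; field_simp
    _ ≤ k * G ^ p := by gcongr

theorem stmt_11_general (n : ℕ) (τ o : EuclideanSpace ℝ (Fin n))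
    (dc ε k₁ α c : ℝ) (hε : 0 < ε) (hk₁ : 0 < k₁)
    (hα0 : 0 < α) (hc : 0 < c)
    (B : EuclideanSpace ℝ (Fin n) → ℝ)
    (hB : ∀ y, B y = ‖y - τ‖ ^ 2 / (‖y - o‖ - dc + 1 / ε))
    (x : EuclideanSpace ℝ (Fin n)) (hx : dc < ‖x - o‖)
    (hgrad : c * ‖x - τ‖ ≤ ‖gradient B x‖) :
    (inner ℝ (gradient B x)
        ((-k₁ * ‖gradient B x‖ ^ (α - 1)) • gradient B x) : ℝ) ≤
      -(k₁ * c ^ (1 + α) / ε ^ ((1 + α) / 2)) * B x ^ ((1 + α) / 2) := by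
  have hsafe : 0 ≤ ‖x - o‖ - dc := by linarith
  have hB_nonneg : 0 ≤ B x := by rw [hB]; positivity
  have hB_le : B x ≤ ε * ‖x - τ‖ ^ 2 := by
    rw [hB]; exact div_add_one_div_le_mul (sq_nonneg _) hε hsafe
  rw [inner_smul_rpow_self _ (by linarith), neg_mul, neg_mul, neg_le_neg_iff]
  exact mul_rpow_half_le_of_le_mul_sq hk₁.le hc.le hε (by linarith) hB_nonneg (norm_nonneg _)
    hB_le hgrad

/-- Lyapunov decrease estimate for the barrier-function controller
`u = -k₁·∇B·‖∇B‖^(α-1)`: if `‖∇B(x)‖ ≥ c‖x-τ‖` at a safe point `x`, then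
`⟨∇B(x), u⟩ ≤ -K·B(x)^β` with `β = (1+α)/2` and `K = k₁·c^(1+α)/ε^β`. -/
theorem stmt_11 (n : ℕ) (hn : 1 ≤ n) (τ o : EuclideanSpace ℝ (Fin n))
    (dc ε k₁ α c : ℝ) (hdc : 0 < dc) (hε : 0 < ε) (hk₁ : 0 < k₁)
    (hα0 : 0 < α) (hα1 : α < 1) (hc : 0 < c)
    (B : EuclideanSpace ℝ (Fin n) → ℝ)
    (hB : ∀ y, B y = ‖y - τ‖ ^ 2 / (‖y - o‖ - dc + 1 / ε))
    (x : EuclideanSpace ℝ (Fin n)) (hx : dc < ‖x - o‖)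
    (hdiff : DifferentiableAt ℝ B x)
    (hgrad : c * ‖x - τ‖ ≤ ‖gradient B x‖) :
    (inner ℝ (gradient B x)
        ((-k₁ * ‖gradient B x‖ ^ (α - 1)) • gradient B x) : ℝ) ≤
      -(k₁ * c ^ (1 + α) / ε ^ ((1 + α) / 2)) * B x ^ ((1 + α) / 2) :=
  stmt_11_general n τ o dc ε k₁ α c hε hk₁ hα0 hc B hB x hx hgrad
end

section
/- Let a ∈ ℝ, b ∈ ℝ with b ≠ 0, k > 0, α ∈ (0,1), and let x_d : [0,∞) → ℝ be continuously differentiable. Let x : [0,∞) → ℝ be differentiable satisfying x'(t) = a·x(t) + b·u(t) where u(t) = (1/b)·(-a·x(t) - k·sign(x(t) - x_d(t))·|x(t) - x_d(t)|^α + x_d'(t)). Then x(t) = x_d(t) for all t ≥ |x(0) - x_d(0)|^(1-α)/(k·(1-α)). -/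
/-!
Along the error `e = x - x_d` the closed loop reads `ė = -k·sign(e)·|e|^α`. Away from zeros of `e`
this gives `d/dt |e|^(1-α) = -k(1-α)`, so `|e|^(1-α)` decreases linearly and `e` cannot avoid zero
up to time `|e(0)|^(1-α)/(k(1-α))`. Since `d/dt e² = -2k·|e|^(1+α) ≤ 0`, once `e` vanishes it stays
zero.
-/

open Set

theorem Real.sign_mul_self_eq_abs (x : ℝ) : Real.sign x * x = |x| := by
  rcases lt_trichotomy x 0 with hx | rfl | hx
  · rw [Real.sign_of_neg hx, abs_of_neg hx]; ring
  · simp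
  · rw [Real.sign_of_pos hx, abs_of_pos hx]; ring

section FiniteTimeStability

variable {f : ℝ → ℝ} {k α t : ℝ}

theorem hasDerivAt_abs_of_hasDerivAt_neg_sign_mul_rpow
    (hf : HasDerivAt f (-(k * Real.sign (f t) * |f t| ^ α)) t) (ht : f t ≠ 0) :
    HasDerivAt (fun s => |f s|) (-(k * |f t| ^ α)) t := by
  rcases ht.lt_or_gt with hneg | hpos
  · exact ((hasDerivAt_abs_neg hneg).comp t hf).congr_deriv (by simp [Real.sign_of_neg hneg])
  · exact ((hasDerivAt_abs_pos hpos).comp t hf).congr_deriv (by simp [Real.sign_of_pos hpos])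

theorem hasDerivAt_abs_rpow_one_sub_of_hasDerivAt_neg_sign_mul_rpow
    (hf : HasDerivAt f (-(k * Real.sign (f t) * |f t| ^ α)) t) (ht : f t ≠ 0) :
    HasDerivAt (fun s => |f s| ^ (1 - α)) (-(k * (1 - α))) t := by
  have habs : 0 < |f t| := abs_pos.mpr ht
  have hpow : |f t| ^ α * |f t| ^ (1 - α - 1) = 1 := by
    rw [← Real.rpow_add habs]; norm_num
  convert (hasDerivAt_abs_of_hasDerivAt_neg_sign_mul_rpow hf ht).rpow_const
    (p := 1 - α) (Or.inl habs.ne') using 1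
  linear_combination (k * (1 - α)) * hpow

theorem exists_eq_zero_of_hasDerivAt_neg_sign_mul_rpow {t₀ t₁ : ℝ} (h₀₁ : t₀ ≤ t₁)
    (hf : ∀ t ∈ Icc t₀ t₁, HasDerivAt f (-(k * Real.sign (f t) * |f t| ^ α)) t)
    (hT : |f t₀| ^ (1 - α) ≤ k * (1 - α) * (t₁ - t₀)) :
    ∃ t ∈ Icc t₀ t₁, f t = 0 := by
  by_contra! hne
  set W : ℝ → ℝ := fun s => |f s| ^ (1 - α) + k * (1 - α) * s
  have hW : ∀ t ∈ Icc t₀ t₁, HasDerivAt W 0 t := fun t ht =>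
    ((hasDerivAt_abs_rpow_one_sub_of_hasDerivAt_neg_sign_mul_rpow (hf t ht) (hne t ht)).add
      ((hasDerivAt_id t).const_mul (k * (1 - α)))).congr_deriv (by ring)
  have hconst := constant_of_has_deriv_right_zero
    (fun t ht => (hW t ht).continuousAt.continuousWithinAt)
    (fun t ht => (hW t (Ico_subset_Icc_self ht)).hasDerivWithinAt) t₁ ⟨h₀₁, le_rfl⟩
  have hpos : 0 < |f t₁| ^ (1 - α) :=
    Real.rpow_pos_of_pos (abs_pos.mpr (hne t₁ ⟨h₀₁, le_rfl⟩)) _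
  simp only [W] at hconst
  linarith

theorem antitoneOn_abs_of_hasDerivAt_neg_sign_mul_rpow {t₀ : ℝ} (hk : 0 ≤ k)
    (hf : ∀ t ∈ Ici t₀, HasDerivAt f (-(k * Real.sign (f t) * |f t| ^ α)) t) :
    AntitoneOn (fun t => |f t|) (Ici t₀) := by
  have hsq : ∀ t ∈ Ici t₀,
      HasDerivAt (fun s => f s ^ 2) (-(2 * k * (|f t| * |f t| ^ α))) t := fun t ht => by
    refine ((hf t ht).pow 2).congr_deriv ?_
    rw [← Real.sign_mul_self_eq_abs]
    push_cast
    ring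
  have hanti : AntitoneOn (fun t => f t ^ 2) (Ici t₀) := by
    refine antitoneOn_of_deriv_nonpos (convex_Ici t₀)
      (fun t ht => (hsq t ht).continuousAt.continuousWithinAt)
      (fun t ht => (hsq t (interior_subset ht)).differentiableAt.differentiableWithinAt)
      (fun t ht => ?_)
    rw [(hsq t (interior_subset ht)).deriv]
    have := mul_nonneg (abs_nonneg (f t)) (Real.rpow_nonneg (abs_nonneg (f t)) α)
    nlinarith
  exact fun s hs t ht hst => sq_le_sq.mp (hanti hs ht hst)

end FiniteTimeStability

theorem hasDerivAt_trackingError {a b k α : ℝ} (hb : b ≠ 0) {xd x u : ℝ → ℝ} {t : ℝ}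
    (hxd : DifferentiableAt ℝ xd t)
    (hu : u t = (1 / b) *
      (-a * x t - k * Real.sign (x t - xd t) * |x t - xd t| ^ α + deriv xd t))
    (hx : HasDerivAt x (a * x t + b * u t) t) :
    HasDerivAt (fun s => x s - xd s)
      (-(k * Real.sign (x t - xd t) * |x t - xd t| ^ α)) t := by
  refine (hx.sub hxd.hasDerivAt).congr_deriv ?_
  rw [hu]
  field_simp
  ring

theorem stmt_13_general (a b k α : ℝ) (hb : b ≠ 0) (hk : 0 < k) (hα1 : α < 1)
    (xd : ℝ → ℝ) (hxd : ContDiff ℝ 1 xd)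
    (x u : ℝ → ℝ)
    (hu : ∀ t, 0 ≤ t → u t = (1 / b) *
      (-a * x t - k * Real.sign (x t - xd t) * |x t - xd t| ^ α + deriv xd t))
    (hx : ∀ t, 0 ≤ t → HasDerivAt x (a * x t + b * u t) t) :
    ∀ t, |x 0 - xd 0| ^ (1 - α) / (k * (1 - α)) ≤ t → x t = xd t := by
  intro t ht
  have hkα : 0 < k * (1 - α) := mul_pos hk (sub_pos.mpr hα1)
  have he : ∀ t ∈ Ici (0 : ℝ), HasDerivAt (fun s => x s - xd s)
      (-(k * Real.sign (x t - xd t) * |x t - xd t| ^ α)) t := fun t ht =>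
    hasDerivAt_trackingError hb (hxd.differentiable one_ne_zero t) (hu t ht) (hx t ht)
  obtain ⟨s, hs, hes⟩ := exists_eq_zero_of_hasDerivAt_neg_sign_mul_rpow
    (by positivity : (0 : ℝ) ≤ |x 0 - xd 0| ^ (1 - α) / (k * (1 - α)))
    (fun t ht => he t ht.1) (by rw [sub_zero, mul_div_cancel₀ _ hkα.ne'])
  have hle := antitoneOn_abs_of_hasDerivAt_neg_sign_mul_rpow hk.le he hs.1
    (hs.1.trans (hs.2.trans ht)) (hs.2.trans ht)
  simp only [hes, abs_zero, abs_nonpos_iff] at hle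
  exact sub_eq_zero.mp hle

/-- Finite-time tracking for the scalar system `ẋ = a·x + b·u` with feedback
`u = (1/b)(-a·x - k·sign(x-x_d)·|x-x_d|^α + ẋ_d)`: the state reaches the C¹
reference `x_d` by time `|x(0)-x_d(0)|^(1-α)/(k(1-α))`. -/
theorem stmt_13 (a b k α : ℝ) (hb : b ≠ 0) (hk : 0 < k) (hα0 : 0 < α) (hα1 : α < 1)
    (xd : ℝ → ℝ) (hxd : ContDiff ℝ 1 xd)
    (x u : ℝ → ℝ)
    (hu : ∀ t, 0 ≤ t → u t = (1 / b) *
      (-a * x t - k * Real.sign (x t - xd t) * |x t - xd t| ^ α + deriv xd t))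
    (hx : ∀ t, 0 ≤ t → HasDerivAt x (a * x t + b * u t) t) :
    ∀ t, |x 0 - xd 0| ^ (1 - α) / (k * (1 - α)) ≤ t → x t = xd t :=
  stmt_13_general a b k α hb hk hα1 xd hxd x u hu hx
end

section
/- Let n ≥ 1, α ∈ (0,1), let Ã be a real n×n matrix, and let P, Q be symmetric positive definite real n×n matrices with Ãᵀ·P + P·Ã = -Q. Let x : [0,∞) → ℝⁿ be differentiable with x'(t) = Ã·x(t) - x(t)·‖x(t)‖^(α-1) whenever x(t) ≠ 0, and x'(t) = 0 whenever x(t) = 0. Then there exists a finite T ≥ 0 such that x(t) = 0 for all t ≥ T; moreover V(t) = x(t)ᵀ·P·x(t) satisfies V'(t) ≤ -c·V(t)^β for all t with x(t) ≠ 0, where β = (1+α)/2 and c = 2·λ_min(P)/λ_max(P)^β. -/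
/-!
Along a trajectory, `V = xᵀ P x` satisfies `V' = -xᵀ Q x - 2 ‖x‖^(α-1) V` by the Lyapunov
equation, and the Rayleigh bounds `λ_min ‖x‖² ≤ V ≤ λ_max ‖x‖²` turn the damping term into
`V' ≤ -c V^β`. As `β < 1`, `V^(1-β) + (1-β) c t` is nonincreasing while `V > 0`, so `V` vanishes
before time `V(0)^(1-β) / ((1-β) c)`; being nonincreasing and nonnegative it then stays zero, and
so does `x` because `P` is positive definite.
-/

open Matrix Set RealInnerProductSpace

section FiniteTime

variable {V : ℝ → ℝ} {c β : ℝ}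

theorem antitoneOn_of_deriv_le_neg_rpow (hc : 0 ≤ c) (hcont : ContinuousOn V (Ici 0))
    (hdiff : DifferentiableOn ℝ V (Ioi 0)) (hnonneg : ∀ t, 0 ≤ t → 0 ≤ V t)
    (hderiv : ∀ t, 0 < t → 0 < V t → deriv V t ≤ -c * V t ^ β) :
    AntitoneOn V (Ici 0) := by
  refine antitoneOn_of_deriv_nonpos (convex_Ici 0) hcont (by rwa [interior_Ici]) fun t ht => ?_
  rw [interior_Ici] at ht
  rcases (hnonneg t ht.le).eq_or_lt with hzero | hpos
  · have hmin : IsLocalMin V t := by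
      filter_upwards [Ioi_mem_nhds ht] with s hs
      exact hzero ▸ hnonneg s hs.le
    exact hmin.deriv_eq_zero.le
  · linarith [hderiv t ht hpos, mul_nonneg hc (Real.rpow_nonneg hpos.le β)]

theorem antitoneOn_rpow_add_mul_of_deriv_le_neg_rpow (hβ : β < 1)
    (hcont : ContinuousOn V (Ici 0)) (hdiff : DifferentiableOn ℝ V (Ioi 0))
    (hpos : ∀ t, 0 ≤ t → 0 < V t) (hderiv : ∀ t, 0 < t → deriv V t ≤ -c * V t ^ β) :
    AntitoneOn (fun t => V t ^ (1 - β) + (1 - β) * c * t) (Ici 0) := by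
  have hg : ∀ t, 0 < t → HasDerivAt (fun t => V t ^ (1 - β) + (1 - β) * c * t)
      (deriv V t * (1 - β) * V t ^ (1 - β - 1) + (1 - β) * c) t := fun t ht =>
    ((hdiff.differentiableAt (Ioi_mem_nhds ht)).hasDerivAt.rpow_const
      (Or.inl (hpos t ht.le).ne')).add (by simpa using (hasDerivAt_id t).const_mul ((1 - β) * c))
  refine antitoneOn_of_deriv_nonpos (convex_Ici 0)
    ((hcont.rpow_const fun t ht => Or.inl (hpos t ht).ne').add (by fun_prop))
    (fun t ht => (hg t (by simpa using ht)).differentiableAt.differentiableWithinAt)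
    fun t ht => ?_
  rw [interior_Ici] at ht
  have hcancel : V t ^ (1 - β - 1) * V t ^ β = 1 := by
    rw [← Real.rpow_add (hpos t ht.le)]; simp
  have hscale : 0 ≤ (1 - β) * V t ^ (1 - β - 1) :=
    mul_nonneg (sub_nonneg.mpr hβ.le) (Real.rpow_nonneg (hpos t ht.le).le _)
  calc deriv (fun t => V t ^ (1 - β) + (1 - β) * c * t) t
      = (1 - β) * V t ^ (1 - β - 1) * deriv V t + (1 - β) * c := by rw [(hg t ht).deriv]; ring
    _ ≤ (1 - β) * V t ^ (1 - β - 1) * (-c * V t ^ β) + (1 - β) * c :=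
      add_le_add_left (mul_le_mul_of_nonneg_left (hderiv t ht) hscale) _
    _ = (1 - β) * c * (1 - V t ^ (1 - β - 1) * V t ^ β) := by ring
    _ = 0 := by rw [hcancel]; ring

theorem exists_forall_ge_eq_zero_of_deriv_le_neg_rpow (hc : 0 < c) (hβ : β < 1)
    (hcont : ContinuousOn V (Ici 0)) (hdiff : DifferentiableOn ℝ V (Ioi 0))
    (hnonneg : ∀ t, 0 ≤ t → 0 ≤ V t)
    (hderiv : ∀ t, 0 < t → 0 < V t → deriv V t ≤ -c * V t ^ β) :
    ∃ T, 0 ≤ T ∧ ∀ t, T ≤ t → V t = 0 := by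
  obtain ⟨T, hT, hVT⟩ : ∃ T, 0 ≤ T ∧ V T = 0 := by
    by_contra! hne
    have hpos t (ht : 0 ≤ t) : 0 < V t := (hnonneg t ht).lt_of_ne' (hne t ht)
    have hγc : 0 < (1 - β) * c := mul_pos (by linarith) hc
    -- by this time `V ^ (1 - β)`, decreasing at rate at least `(1 - β) c`, would be negative
    set T := V 0 ^ (1 - β) / ((1 - β) * c) + 1
    have hT : 0 ≤ T := by have := Real.rpow_nonneg (hnonneg 0 le_rfl) (1 - β); positivity
    have hle := antitoneOn_rpow_add_mul_of_deriv_le_neg_rpow hβ hcont hdiff hpos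
      (fun t ht => hderiv t ht (hpos t ht.le)) self_mem_Ici hT hT
    have hTeq : (1 - β) * c * T = V 0 ^ (1 - β) + (1 - β) * c := by
      rw [mul_add, mul_div_cancel₀ _ hγc.ne', mul_one]
    have := Real.rpow_nonneg (hnonneg T hT) (1 - β)
    simp only [mul_zero, add_zero] at hle
    linarith
  have hanti := antitoneOn_of_deriv_le_neg_rpow hc.le hcont hdiff hnonneg hderiv
  exact ⟨T, hT, fun t ht => le_antisymm (hVT ▸ hanti hT (hT.trans ht) ht)
    (hnonneg t (hT.trans ht))⟩

end FiniteTime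

theorem div_rpow_mul_rpow_le_rpow_sub_one_mul {r v a b α : ℝ} (hr : 0 < r) (ha : 0 ≤ a)
    (hb : 0 < b) (hα : -1 ≤ α) (hlow : a * r ^ 2 ≤ v) (hup : v ≤ b * r ^ 2) :
    a / b ^ ((1 + α) / 2) * v ^ ((1 + α) / 2) ≤ r ^ (α - 1) * v := by
  have hv : 0 ≤ v := le_trans (by positivity) hlow
  calc a / b ^ ((1 + α) / 2) * v ^ ((1 + α) / 2) = a * (v / b) ^ ((1 + α) / 2) := by
        rw [Real.div_rpow hv hb.le]; ring
    _ ≤ a * (r ^ 2) ^ ((1 + α) / 2) := by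
        gcongr
        · linarith
        · rwa [div_le_iff₀ hb, mul_comm]
    _ = r ^ (α - 1) * (a * r ^ 2) := by
        rw [← Real.rpow_natCast r 2, ← Real.rpow_mul hr.le, mul_left_comm, ← Real.rpow_add hr]
        ring_nf
    _ ≤ r ^ (α - 1) * v := by gcongr

theorem HasDerivAt.inner_apply_self_of_isSymmetric {E : Type*} [NormedAddCommGroup E]
    [InnerProductSpace ℝ E] [FiniteDimensional ℝ E] {T : E →ₗ[ℝ] E} (hT : T.IsSymmetric)
    {x : ℝ → E} {v : E} {t : ℝ} (hx : HasDerivAt x v t) :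
    HasDerivAt (fun s => ⟪x s, T (x s)⟫) (2 * ⟪v, T (x t)⟫) t := by
  have hTx : HasDerivAt (fun s => T (x s)) (T v) t :=
    (LinearMap.toContinuousLinearMap T).hasFDerivAt.comp_hasDerivAt t hx
  refine (hx.inner ℝ hTx).congr_deriv ?_
  rw [← hT, real_inner_comm]
  ring

section QuadraticForm

variable {ι : Type*} [Fintype ι] [DecidableEq ι] {M : Matrix ι ι ℝ}

theorem Matrix.inner_toEuclideanLin_self_eq_dotProduct (M : Matrix ι ι ℝ)
    (y : EuclideanSpace ℝ ι) : ⟪y, toEuclideanLin M y⟫ = y.ofLp ⬝ᵥ M *ᵥ y.ofLp := by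
  simp [EuclideanSpace.inner_eq_star_dotProduct, dotProduct_comm]

theorem Matrix.PosDef.inner_toEuclideanLin_self_pos (hM : M.PosDef) {y : EuclideanSpace ℝ ι}
    (hy : y ≠ 0) : 0 < ⟪y, toEuclideanLin M y⟫ := by
  rw [inner_toEuclideanLin_self_eq_dotProduct]
  exact hM.dotProduct_mulVec_pos (by simpa using hy)

theorem Matrix.PosSemidef.inner_toEuclideanLin_self_nonneg (hM : M.PosSemidef)
    (y : EuclideanSpace ℝ ι) : 0 ≤ ⟪y, toEuclideanLin M y⟫ := by
  rw [inner_toEuclideanLin_self_eq_dotProduct]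
  exact hM.dotProduct_mulVec_nonneg _

theorem Matrix.IsHermitian.inner_toEuclideanLin_self_eq_sum (hM : M.IsHermitian)
    (y : EuclideanSpace ℝ ι) :
    ⟪y, toEuclideanLin M y⟫ =
      ∑ i, hM.eigenvalues i * hM.eigenvectorBasis.repr y i ^ 2 := by
  set b := hM.eigenvectorBasis
  have hb i : toEuclideanLin M (b i) = hM.eigenvalues i • b i := by
    ext j
    simpa using congrFun (hM.mulVec_eigenvectorBasis i) j
  have hrepr i : b.repr (toEuclideanLin M y) i = hM.eigenvalues i * b.repr y i := by
    rw [b.repr_apply_apply, b.repr_apply_apply, ← isSymmetric_toEuclideanLin_iff.mpr hM, hb,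
      real_inner_smul_left]
  rw [← b.repr.inner_map_map, PiLp.inner_apply]
  refine Finset.sum_congr rfl fun i _ => ?_
  rw [hrepr]
  simp only [RCLike.inner_apply, conj_trivial]
  ring

theorem Matrix.IsHermitian.norm_sq_eq_sum (hM : M.IsHermitian) (y : EuclideanSpace ℝ ι) :
    ‖y‖ ^ 2 = ∑ i, hM.eigenvectorBasis.repr y i ^ 2 := by
  rw [← hM.eigenvectorBasis.repr.norm_map, EuclideanSpace.norm_sq_eq]
  simp

theorem Matrix.IsHermitian.iInf_eigenvalues_mul_norm_sq_le [Nonempty ι] (hM : M.IsHermitian)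
    (y : EuclideanSpace ℝ ι) : (⨅ i, hM.eigenvalues i) * ‖y‖ ^ 2 ≤ ⟪y, toEuclideanLin M y⟫ := by
  rw [hM.inner_toEuclideanLin_self_eq_sum, hM.norm_sq_eq_sum, Finset.mul_sum]
  gcongr with i
  exact ciInf_le (finite_range _).bddBelow i

theorem Matrix.IsHermitian.inner_toEuclideanLin_self_le_iSup_eigenvalues_mul [Nonempty ι]
    (hM : M.IsHermitian) (y : EuclideanSpace ℝ ι) :
    ⟪y, toEuclideanLin M y⟫ ≤ (⨆ i, hM.eigenvalues i) * ‖y‖ ^ 2 := by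
  rw [hM.inner_toEuclideanLin_self_eq_sum, hM.norm_sq_eq_sum, Finset.mul_sum]
  gcongr with i
  exact le_ciSup (finite_range _).bddAbove i

theorem Matrix.PosDef.iInf_eigenvalues_pos [Nonempty ι] (hM : M.PosDef) :
    0 < ⨅ i, hM.isHermitian.eigenvalues i := by
  obtain ⟨i, hi⟩ := exists_eq_ciInf_of_finite (f := hM.isHermitian.eigenvalues)
  exact hi ▸ hM.eigenvalues_pos i

theorem Matrix.PosDef.iSup_eigenvalues_pos [Nonempty ι] (hM : M.PosDef) :
    0 < ⨆ i, hM.isHermitian.eigenvalues i :=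
  (hM.eigenvalues_pos (Classical.arbitrary ι)).trans_le
    (le_ciSup (finite_range _).bddAbove _)

theorem Matrix.inner_toEuclideanLin_apply_toEuclideanLin (A P : Matrix ι ι ℝ)
    (y : EuclideanSpace ℝ ι) :
    ⟪toEuclideanLin A y, toEuclideanLin P y⟫ = ⟪y, toEuclideanLin (Aᵀ * P) y⟫ := by
  simp [EuclideanSpace.inner_eq_star_dotProduct, dotProduct_comm, dotProduct_mulVec,
    ← vecMul_vecMul, vecMul_transpose]

theorem Matrix.two_mul_inner_toEuclideanLin_eq_neg_of_lyapunov {A P Q : Matrix ι ι ℝ}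
    (hP : P.IsHermitian) (hLyap : Aᵀ * P + P * A = -Q) (y : EuclideanSpace ℝ ι) :
    2 * ⟪toEuclideanLin A y, toEuclideanLin P y⟫ = -⟪y, toEuclideanLin Q y⟫ := by
  have hsym : Pᵀ = P := hP
  calc 2 * ⟪toEuclideanLin A y, toEuclideanLin P y⟫
      = ⟪toEuclideanLin A y, toEuclideanLin P y⟫ + ⟪toEuclideanLin P y, toEuclideanLin A y⟫ := by
        rw [real_inner_comm]; ring
    _ = ⟪y, toEuclideanLin (Aᵀ * P + P * A) y⟫ := by
        rw [inner_toEuclideanLin_apply_toEuclideanLin, inner_toEuclideanLin_apply_toEuclideanLin,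
          hsym, map_add, LinearMap.add_apply, inner_add_right]
    _ = -⟪y, toEuclideanLin Q y⟫ := by
        rw [hLyap, map_neg, LinearMap.neg_apply, inner_neg_right]

theorem Matrix.PosDef.deriv_inner_toEuclideanLin_self_le_of_lyapunov [Nonempty ι]
    {A P Q : Matrix ι ι ℝ} (hP : P.PosDef) (hQ : Q.PosSemidef) (hLyap : Aᵀ * P + P * A = -Q)
    {α : ℝ} (hα : -1 ≤ α) {x : ℝ → EuclideanSpace ℝ ι} {t : ℝ} (hxt : x t ≠ 0)
    (hx : HasDerivAt x (toEuclideanLin A (x t) - ‖x t‖ ^ (α - 1) • x t) t) :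
    deriv (fun s => ⟪x s, toEuclideanLin P (x s)⟫) t ≤
      -(2 * (⨅ i, hP.isHermitian.eigenvalues i) /
          (⨆ i, hP.isHermitian.eigenvalues i) ^ ((1 + α) / 2)) *
        ⟪x t, toEuclideanLin P (x t)⟫ ^ ((1 + α) / 2) := by
  have hV := hx.inner_apply_self_of_isSymmetric (isSymmetric_toEuclideanLin_iff.mpr hP.isHermitian)
  rw [hV.deriv, inner_sub_left, real_inner_smul_left, mul_sub,
    two_mul_inner_toEuclideanLin_eq_neg_of_lyapunov hP.isHermitian hLyap]
  have hdamp := div_rpow_mul_rpow_le_rpow_sub_one_mul (norm_pos_iff.mpr hxt)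
    hP.iInf_eigenvalues_pos.le hP.iSup_eigenvalues_pos hα
    (hP.isHermitian.iInf_eigenvalues_mul_norm_sq_le (x t))
    (hP.isHermitian.inner_toEuclideanLin_self_le_iSup_eigenvalues_mul (x t))
  rw [mul_div_assoc]
  linarith [hQ.inner_toEuclideanLin_self_nonneg (x t)]

end QuadraticForm

/-- Finite-time stabilization of the closed loop `ẋ = Ã·x - x·‖x‖^(α-1)` where
`Ã` satisfies the Lyapunov equation `Ãᵀ·P + P·Ã = -Q` with `P, Q` symmetric
positive definite: every solution vanishes after a finite time, and
`V(t) = x(t)ᵀ·P·x(t)` satisfies `V' ≤ -c·V^β` with `β = (1+α)/2` and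
`c = 2·λ_min(P)/λ_max(P)^β`. -/
theorem stmt_14 (n : ℕ) (hn : 1 ≤ n) (α : ℝ) (hα0 : 0 < α) (hα1 : α < 1)
    (Atil P Q : Matrix (Fin n) (Fin n) ℝ)
    (hP : P.PosDef) (hQ : Q.PosDef)
    (hLyap : Atilᵀ * P + P * Atil = -Q)
    (x : ℝ → EuclideanSpace ℝ (Fin n))
    (hx : ∀ t, 0 ≤ t → x t ≠ 0 →
      HasDerivAt x (Matrix.toEuclideanLin Atil (x t) - ‖x t‖ ^ (α - 1) • x t) t)
    (hx0 : ∀ t, 0 ≤ t → x t = 0 → HasDerivAt x 0 t) :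
    (∃ T : ℝ, 0 ≤ T ∧ ∀ t, T ≤ t → x t = 0) ∧
      ∀ t, 0 ≤ t → x t ≠ 0 →
        deriv (fun s => (inner ℝ (x s) (Matrix.toEuclideanLin P (x s)) : ℝ)) t ≤
          -(2 * (⨅ i, hP.isHermitian.eigenvalues i) /
              (⨆ i, hP.isHermitian.eigenvalues i) ^ ((1 + α) / 2)) *
            (inner ℝ (x t) (Matrix.toEuclideanLin P (x t)) : ℝ) ^ ((1 + α) / 2) := by
  have : Nonempty (Fin n) := ⟨⟨0, hn⟩⟩
  have hPsym := isSymmetric_toEuclideanLin_iff.mpr hP.isHermitian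
  have hderiv t (ht : 0 ≤ t) (hxt : x t ≠ 0) :=
    hP.deriv_inner_toEuclideanLin_self_le_of_lyapunov hQ.posSemidef hLyap (by linarith) hxt
      (hx t ht hxt)
  have hdiff t (ht : 0 ≤ t) :
      DifferentiableAt ℝ (fun s => ⟪x s, toEuclideanLin P (x s)⟫) t := by
    by_cases hxt : x t = 0
    · exact ((hx0 t ht hxt).inner_apply_self_of_isSymmetric hPsym).differentiableAt
    · exact ((hx t ht hxt).inner_apply_self_of_isSymmetric hPsym).differentiableAt
  have hc : 0 < 2 * (⨅ i, hP.isHermitian.eigenvalues i) /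
      (⨆ i, hP.isHermitian.eigenvalues i) ^ ((1 + α) / 2) :=
    div_pos (mul_pos two_pos hP.iInf_eigenvalues_pos)
      (Real.rpow_pos_of_pos hP.iSup_eigenvalues_pos _)
  obtain ⟨T, hT, hVT⟩ := exists_forall_ge_eq_zero_of_deriv_le_neg_rpow hc (by linarith)
    (fun t ht => (hdiff t ht).continuousAt.continuousWithinAt)
    (fun t ht => (hdiff t ht.le).differentiableWithinAt)
    (fun t _ => hP.posSemidef.inner_toEuclideanLin_self_nonneg (x t))
    (fun t ht hVt => hderiv t ht.le fun hxt => by simp [hxt] at hVt)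
  exact ⟨⟨T, hT, fun t ht => by_contra fun hxt =>
    (hP.inner_toEuclideanLin_self_pos hxt).ne' (hVT t ht)⟩, hderiv⟩
end
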